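/- arXiv:2204.14182 — 3 statements merged into one kernel-verified Lean document; each statement's English description precedes it below -/
import Mathlib

section
/- Let H be a finite-dimensional weak Hopf algebra with a nonzero left integral Λ. Then Δ_Λ(h) := Λ₁ ⊗ S(Λ₂)h defines a coassociative comultiplication on H which is a morphism of H-bimodules (i.e., (id ⊗ m)(Δ_Λ ⊗ id) = Δ_Λ m = (m ⊗ id)(id ⊗ Δ_Λ)); thus H is a non-counital Frobenius algebra. -/
open TensorProduct

/-- A weak bialgebra over a field `k`: a `k`-algebra and `k`-coalgebra `(H,m,u,Δ,ε)` such that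
`Δ` is multiplicative, `ε` is weakly multiplicative (`ε(abc) = ε(ab₁)ε(b₂c) = ε(ab₂)ε(b₁c)`),
and `Δ²(1) = (Δ(1)⊗1)(1⊗Δ(1)) = (1⊗Δ(1))(Δ(1)⊗1)`. -/
structure WeakBialgebraData (k H : Type*) [Field k] [Ring H] [Algebra k H] where
  comul : H →ₗ[k] H ⊗[k] H
  counit : H →ₗ[k] k
  coassoc : ∀ h : H,
    (TensorProduct.assoc k H H H) ((LinearMap.rTensor H comul) (comul h))
      = (LinearMap.lTensor H comul) (comul h)
  counit_left : ∀ h : H,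
    (TensorProduct.lid k H) ((LinearMap.rTensor H counit) (comul h)) = h
  counit_right : ∀ h : H,
    (TensorProduct.rid k H) ((LinearMap.lTensor H counit) (comul h)) = h
  comul_mul : ∀ a b : H, comul (a * b) = comul a * comul b
  counit_weak : ∀ a b c : H,
    (LinearMap.mul' k k) ((TensorProduct.map counit counit)
      ((a ⊗ₜ[k] (1 : H)) * comul b * ((1 : H) ⊗ₜ[k] c))) = counit (a * b * c)
  counit_weak' : ∀ a b c : H,
    (LinearMap.mul' k k) ((TensorProduct.map counit counit)
      ((a ⊗ₜ[k] (1 : H)) * (TensorProduct.comm k H H (comul b)) * ((1 : H) ⊗ₜ[k] c)))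
      = counit (a * b * c)
  comul_one_left :
    (LinearMap.rTensor H comul) (comul 1)
      = (comul 1 ⊗ₜ[k] (1 : H)) * ((TensorProduct.assoc k H H H).symm ((1 : H) ⊗ₜ[k] comul 1))
  comul_one_right :
    (LinearMap.rTensor H comul) (comul 1)
      = ((TensorProduct.assoc k H H H).symm ((1 : H) ⊗ₜ[k] comul 1)) * (comul 1 ⊗ₜ[k] (1 : H))

/-- The source counital map `ε_s(x) = 1₁ ε(x 1₂)`. -/
noncomputable def epsS {k H : Type*} [Field k] [Ring H] [Algebra k H]
    (W : WeakBialgebraData k H) : H → H := fun x =>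
  (TensorProduct.rid k H)
    ((LinearMap.lTensor H (W.counit ∘ₗ LinearMap.mulLeft k x)) (W.comul 1))

/-- The target counital map `ε_t(x) = ε(1₁ x) 1₂`. -/
noncomputable def epsT {k H : Type*} [Field k] [Ring H] [Algebra k H]
    (W : WeakBialgebraData k H) : H → H := fun x =>
  (TensorProduct.lid k H)
    ((LinearMap.rTensor H (W.counit ∘ₗ LinearMap.mulRight k x)) (W.comul 1))


/-- A weak Hopf algebra: a weak bialgebra with an antipode `S` satisfying
`S(h₁)h₂ = ε_s(h)`, `h₁S(h₂) = ε_t(h)` and `S(h₁)h₂S(h₃) = S(h)`. -/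
structure WeakHopfData (k H : Type*) [Field k] [Ring H] [Algebra k H]
    extends WeakBialgebraData k H where
  antipode : H →ₗ[k] H
  antipode_left : ∀ h : H,
    (LinearMap.mul' k H) ((TensorProduct.map antipode LinearMap.id) (comul h))
      = epsS toWeakBialgebraData h
  antipode_right : ∀ h : H,
    (LinearMap.mul' k H) ((TensorProduct.map LinearMap.id antipode) (comul h))
      = epsT toWeakBialgebraData h
  antipode_mid : ∀ h : H,
    (LinearMap.mul' k H)
      ((TensorProduct.map ((LinearMap.mul' k H) ∘ₗ TensorProduct.map antipode LinearMap.id)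
          antipode)
        ((LinearMap.rTensor H comul) (comul h)))
      = antipode h

/-- The Casimir element `C = Λ₁ ⊗ S(Λ₂)` associated to a left integral `Λ`. -/
noncomputable def casimirC {k H : Type*} [Field k] [Ring H] [Algebra k H]
    (W : WeakHopfData k H) (Λ : H) : H ⊗[k] H :=
  (LinearMap.lTensor H W.antipode) (W.comul Λ)

/-- The comultiplication `Δ_Λ(h) = Λ₁ ⊗ S(Λ₂)h = C · (1 ⊗ h)`, as a linear map. -/
noncomputable def deltaL {k H : Type*} [Field k] [Ring H] [Algebra k H]
    (W : WeakHopfData k H) (Λ : H) : H →ₗ[k] H ⊗[k] H :=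
  (LinearMap.mulLeft k (casimirC W Λ)) ∘ₗ
    (Algebra.TensorProduct.includeRight : H →ₐ[k] H ⊗[k] H).toLinearMap


section WHAux
set_option synthInstance.maxHeartbeats 400000
set_option maxHeartbeats 1000000

open TensorProduct LinearMap

variable {k H : Type*} [Field k] [Ring H] [Algebra k H] (W : WeakHopfData k H)

/-! ### Abbreviations -/

/-- `E = Δ(1)`. -/
noncomputable def wE : H ⊗[k] H := W.comul 1

/-- contraction `x ⊗ y ↦ S(x) y`. -/
noncomputable def mS : H ⊗[k] H →ₗ[k] H :=
  LinearMap.mul' k H ∘ₗ TensorProduct.map W.antipode LinearMap.id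

/-- contraction `x ⊗ y ↦ x S(y)`. -/
noncomputable def mT : H ⊗[k] H →ₗ[k] H :=
  LinearMap.mul' k H ∘ₗ TensorProduct.map LinearMap.id W.antipode

/-- `ε_s` as a linear map. -/
noncomputable def xiS : H →ₗ[k] H := mS W ∘ₗ W.comul

/-- `ε_t` as a linear map. -/
noncomputable def xiT : H →ₗ[k] H := mT W ∘ₗ W.comul

/-- counit contraction on the left leg. -/
noncomputable def cL : H ⊗[k] H →ₗ[k] H :=
  (TensorProduct.lid k H).toLinearMap ∘ₗ LinearMap.rTensor H W.counit

/-- counit contraction on the right leg. -/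
noncomputable def cR : H ⊗[k] H →ₗ[k] H :=
  (TensorProduct.rid k H).toLinearMap ∘ₗ LinearMap.lTensor H W.counit

lemma mS_apply (x y : H) : mS W (x ⊗ₜ[k] y) = W.antipode x * y := rfl
lemma mT_apply (x y : H) : mT W (x ⊗ₜ[k] y) = x * W.antipode y := rfl
lemma cL_apply (x y : H) : cL W (x ⊗ₜ[k] y) = W.counit x • y := rfl
lemma cR_apply (x y : H) : cR W (x ⊗ₜ[k] y) = W.counit y • x := rfl

lemma cL_comul (h : H) : cL W (W.comul h) = h := W.counit_left h
lemma cR_comul (h : H) : cR W (W.comul h) = h := W.counit_right h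

lemma xiS_apply (h : H) : xiS W h = epsS W.toWeakBialgebraData h := W.antipode_left h
lemma xiT_apply (h : H) : xiT W h = epsT W.toWeakBialgebraData h := W.antipode_right h

/-! ### multiplicativity lemmas -/

lemma rT_mul (x y : H ⊗[k] H) :
    LinearMap.rTensor H W.comul (x * y)
      = LinearMap.rTensor H W.comul x * LinearMap.rTensor H W.comul y := by
  induction x using TensorProduct.induction_on with
  | zero => simp
  | tmul a b =>
    induction y using TensorProduct.induction_on with
    | zero => simp
    | tmul c d =>
      simp [Algebra.TensorProduct.tmul_mul_tmul, W.comul_mul]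
    | add u v hu hv => simp [mul_add, hu, hv]
  | add u v hu hv => simp [add_mul, hu, hv]

lemma lT_mul (x y : H ⊗[k] H) :
    LinearMap.lTensor H W.comul (x * y)
      = LinearMap.lTensor H W.comul x * LinearMap.lTensor H W.comul y := by
  induction x using TensorProduct.induction_on with
  | zero => simp
  | tmul a b =>
    induction y using TensorProduct.induction_on with
    | zero => simp
    | tmul c d =>
      simp [Algebra.TensorProduct.tmul_mul_tmul, W.comul_mul]
    | add u v hu hv => simp [mul_add, hu, hv]
  | add u v hu hv => simp [add_mul, hu, hv]

lemma assoc_eq_alg (z : (H ⊗[k] H) ⊗[k] H) :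
    (TensorProduct.assoc k H H H) z = (Algebra.TensorProduct.assoc k k k H H H) z := by
  induction z using TensorProduct.induction_on with
  | zero => rw [map_zero, map_zero]
  | tmul u c =>
    induction u using TensorProduct.induction_on with
    | zero => rw [zero_tmul, map_zero, map_zero]
    | tmul a b => simp
    | add s t hs ht => rw [add_tmul, map_add, map_add, hs, ht]
  | add s t hs ht => rw [map_add, map_add, hs, ht]

lemma assoc_mul (x y : (H ⊗[k] H) ⊗[k] H) :
    (TensorProduct.assoc k H H H) (x * y)
      = (TensorProduct.assoc k H H H) x * (TensorProduct.assoc k H H H) y := by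
  simp only [assoc_eq_alg, map_mul]

lemma assoc_symm_mul (x y : H ⊗[k] (H ⊗[k] H)) :
    (TensorProduct.assoc k H H H).symm (x * y)
      = (TensorProduct.assoc k H H H).symm x * (TensorProduct.assoc k H H H).symm y := by
  apply (TensorProduct.assoc k H H H).injective
  simp only [LinearEquiv.apply_symm_apply, assoc_mul]

lemma comul_mul_E (h : H) : W.comul h * wE W = W.comul h := by
  rw [wE, ← W.comul_mul, mul_one]

lemma E_mul_comul (h : H) : wE W * W.comul h = W.comul h := by
  rw [wE, ← W.comul_mul, one_mul]

/-! ### counit contractions of coproducts -/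

lemma rT_cR (u : H ⊗[k] H) :
    LinearMap.rTensor H (cR W) (LinearMap.rTensor H W.comul u) = u := by
  induction u using TensorProduct.induction_on with
  | zero => simp
  | tmul x y => simp [cR_comul]
  | add s t hs ht => simp [hs, ht]

lemma lT_cL (u : H ⊗[k] H) :
    LinearMap.lTensor H (cL W) (LinearMap.lTensor H W.comul u) = u := by
  induction u using TensorProduct.induction_on with
  | zero => simp
  | tmul x y => simp [cL_comul]
  | add s t hs ht => simp [hs, ht]

/-! ### ε-forms of the counital maps -/

lemma xiS_E (x : H) : xiS W x = cR W (((1 : H) ⊗ₜ[k] x) * wE W) := by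
  rw [xiS_apply]
  show (TensorProduct.rid k H) ((LinearMap.lTensor H (W.counit ∘ₗ LinearMap.mulLeft k x)) (wE W)) = _
  induction wE W using TensorProduct.induction_on with
  | zero => simp
  | tmul p q => simp [Algebra.TensorProduct.tmul_mul_tmul, cR_apply]
  | add s t hs ht => simp only [add_tmul, tmul_add, map_add, add_mul, mul_add, hs, ht]

lemma xiT_E (x : H) : xiT W x = cL W (wE W * (x ⊗ₜ[k] (1 : H))) := by
  rw [xiT_apply]
  show (TensorProduct.lid k H) ((LinearMap.rTensor H (W.counit ∘ₗ LinearMap.mulRight k x)) (wE W)) = _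
  induction wE W using TensorProduct.induction_on with
  | zero => simp
  | tmul p q => simp [Algebra.TensorProduct.tmul_mul_tmul, cL_apply]
  | add s t hs ht => simp only [add_tmul, tmul_add, map_add, add_mul, mul_add, hs, ht]

lemma xiS_one : xiS W 1 = 1 := by
  rw [xiS_E]
  have : ((1:H) ⊗ₜ[k] (1:H)) * wE W = wE W := by
    rw [← Algebra.TensorProduct.one_def, one_mul]
  rw [this, wE, cR_comul]

lemma xiT_one : xiT W 1 = 1 := by
  rw [xiT_E]
  have : wE W * ((1:H) ⊗ₜ[k] (1:H)) = wE W := by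
    rw [← Algebra.TensorProduct.one_def, mul_one]
  rw [this, wE, cL_comul]

lemma mS_E : mS W (wE W) = 1 := xiS_one W
lemma mT_E : mT W (wE W) = 1 := xiT_one W

/-! ### the maps ρ and λ and the Rid/Lid lemmas -/

/-- `ρ(y) = ε(y 1₁) 1₂`. -/
noncomputable def rho : H →ₗ[k] H :=
  cL W ∘ₗ LinearMap.mulRight k (wE W) ∘ₗ
    (Algebra.TensorProduct.includeLeft : H →ₐ[k] H ⊗[k] H).toLinearMap

/-- `λ(y) = 1₁ ε(1₂ y)`. -/
noncomputable def lam : H →ₗ[k] H :=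
  cR W ∘ₗ LinearMap.mulLeft k (wE W) ∘ₗ
    (Algebra.TensorProduct.includeRight : H →ₐ[k] H ⊗[k] H).toLinearMap

lemma rho_apply (y : H) : rho W y = cL W ((y ⊗ₜ[k] (1:H)) * wE W) := rfl
lemma lam_apply (y : H) : lam W y = cR W (wE W * ((1:H) ⊗ₜ[k] y)) := rfl

lemma wE_def : wE W = W.comul 1 := rfl

lemma lT_rho_comul (h : H) :
    LinearMap.lTensor H (rho W) (W.comul h) = (h ⊗ₜ[k] (1:H)) * wE W := by
  have gen : ∀ u : H ⊗[k] H,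
      LinearMap.lTensor H (rho W) u
        = LinearMap.rTensor H (cR W)
            ((u ⊗ₜ[k] (1:H)) * ((TensorProduct.assoc k H H H).symm ((1:H) ⊗ₜ[k] wE W))) := by
    intro u
    induction u using TensorProduct.induction_on with
    | zero => simp
    | tmul x y =>
      rw [lTensor_tmul, rho_apply]
      induction wE W using TensorProduct.induction_on with
      | zero => simp
      | tmul p q =>
        simp [Algebra.TensorProduct.tmul_mul_tmul, cL_apply, cR_apply, tmul_smul, smul_tmul]
      | add s t hs ht =>
        simp only [add_tmul, tmul_add, map_add, add_mul, mul_add, hs, ht]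
    | add s t hs ht => simp only [add_tmul, tmul_add, map_add, add_mul, mul_add, hs, ht]
  rw [gen]
  have key : (W.comul h ⊗ₜ[k] (1:H)) * ((TensorProduct.assoc k H H H).symm ((1:H) ⊗ₜ[k] wE W))
      = LinearMap.rTensor H W.comul ((h ⊗ₜ[k] (1:H)) * wE W) := by
    rw [wE_def, rT_mul]
    have h1 : LinearMap.rTensor H W.comul ((h:H) ⊗ₜ[k] (1:H)) = W.comul h ⊗ₜ[k] (1:H) := rfl
    rw [h1, show LinearMap.rTensor H W.comul (W.comul 1) = _ from W.comul_one_left, ← mul_assoc]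
    rw [Algebra.TensorProduct.tmul_mul_tmul, ← W.comul_mul, mul_one, mul_one]
  rw [key, rT_cR]

lemma rT_lam_comul (h : H) :
    LinearMap.rTensor H (lam W) (W.comul h) = wE W * ((1:H) ⊗ₜ[k] h) := by
  have gen : ∀ u : H ⊗[k] H,
      LinearMap.rTensor H (lam W) u
        = LinearMap.lTensor H (cL W)
            (((TensorProduct.assoc k H H H) (wE W ⊗ₜ[k] (1:H))) * ((1:H) ⊗ₜ[k] u)) := by
    intro u
    induction u using TensorProduct.induction_on with
    | zero => simp
    | tmul x y =>
      rw [rTensor_tmul, lam_apply]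
      induction wE W using TensorProduct.induction_on with
      | zero => simp
      | tmul p q =>
        simp [Algebra.TensorProduct.tmul_mul_tmul, cL_apply, cR_apply, tmul_smul, smul_tmul]
      | add s t hs ht =>
        simp only [add_tmul, tmul_add, map_add, add_mul, mul_add, hs, ht]
    | add s t hs ht => simp only [add_tmul, tmul_add, map_add, add_mul, mul_add, hs, ht]
  rw [gen]
  have key : ((TensorProduct.assoc k H H H) (wE W ⊗ₜ[k] (1:H))) * ((1:H) ⊗ₜ[k] W.comul h)
      = LinearMap.lTensor H W.comul (wE W * ((1:H) ⊗ₜ[k] h)) := by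
    rw [wE_def, lT_mul]
    have h1 : LinearMap.lTensor H W.comul ((1:H) ⊗ₜ[k] h) = (1:H) ⊗ₜ[k] W.comul h := rfl
    have h2 : LinearMap.lTensor H W.comul (W.comul 1)
        = (TensorProduct.assoc k H H H) (W.comul 1 ⊗ₜ[k] (1:H)) * ((1:H) ⊗ₜ[k] W.comul 1) := by
      rw [← W.coassoc 1, show LinearMap.rTensor H W.comul (W.comul 1) = _ from W.comul_one_left,
        assoc_mul]
      congr 1
      simp
    rw [h1, h2, mul_assoc]
    rw [Algebra.TensorProduct.tmul_mul_tmul, ← W.comul_mul, one_mul, one_mul]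
  rw [key, lT_cL]

/-! ### counit_weak consequences -/

lemma eps_off (y c : H) : W.counit (rho W y * c) = W.counit (y * c) := by
  have ax := W.counit_weak y 1 c
  rw [mul_one, show W.comul (1:H) = wE W from rfl] at ax
  have gen : ∀ v : H ⊗[k] H,
      (LinearMap.mul' k k) ((TensorProduct.map W.counit W.counit)
        ((y ⊗ₜ[k] (1:H)) * v * ((1:H) ⊗ₜ[k] c)))
      = W.counit (cL W ((y ⊗ₜ[k] (1:H)) * v) * c) := by
    intro v
    induction v using TensorProduct.induction_on with
    | zero => simp
    | tmul p q =>
      simp [Algebra.TensorProduct.tmul_mul_tmul, cL_apply, smul_mul_assoc, smul_eq_mul]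
    | add s t hs ht => simp only [add_tmul, tmul_add, map_add, add_mul, mul_add, hs, ht]
  rw [rho_apply, ← gen (wE W)]
  exact ax

lemma eps_off' (y c : H) : W.counit (c * lam W y) = W.counit (c * y) := by
  have ax := W.counit_weak c 1 y
  rw [mul_one, show W.comul (1:H) = wE W from rfl] at ax
  have gen : ∀ v : H ⊗[k] H,
      (LinearMap.mul' k k) ((TensorProduct.map W.counit W.counit)
        ((c ⊗ₜ[k] (1:H)) * v * ((1:H) ⊗ₜ[k] y)))
      = W.counit (c * cR W (v * ((1:H) ⊗ₜ[k] y))) := by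
    intro v
    induction v using TensorProduct.induction_on with
    | zero => simp
    | tmul p q =>
      simp [Algebra.TensorProduct.tmul_mul_tmul, cR_apply, mul_smul_comm, smul_eq_mul, mul_comm]
    | add s t hs ht => simp only [add_tmul, tmul_add, map_add, add_mul, mul_add, hs, ht]
  rw [lam_apply, ← gen (wE W)]
  exact ax

lemma eps_s_rho (y : H) : xiS W (rho W y) = xiS W y := by
  rw [xiS_E, xiS_E]
  have gen : ∀ v : H ⊗[k] H,
      cR W (((1:H) ⊗ₜ[k] rho W y) * v) = cR W (((1:H) ⊗ₜ[k] y) * v) := by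
    intro v
    induction v using TensorProduct.induction_on with
    | zero => simp
    | tmul p q =>
      simp only [Algebra.TensorProduct.tmul_mul_tmul, one_mul, cR_apply]
      rw [eps_off]
    | add s t hs ht => simp only [add_tmul, tmul_add, map_add, add_mul, mul_add, hs, ht]
  exact gen (wE W)

lemma eps_t_lam (y : H) : xiT W (lam W y) = xiT W y := by
  rw [xiT_E, xiT_E]
  have gen : ∀ v : H ⊗[k] H,
      cL W (v * (lam W y ⊗ₜ[k] (1:H))) = cL W (v * (y ⊗ₜ[k] (1:H))) := by
    intro v
    induction v using TensorProduct.induction_on with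
    | zero => simp
    | tmul p q =>
      simp only [Algebra.TensorProduct.tmul_mul_tmul, mul_one, cL_apply]
      rw [eps_off']
    | add s t hs ht => simp only [add_tmul, tmul_add, map_add, add_mul, mul_add, hs, ht]
  exact gen (wE W)

/-- the key weak-bialgebra identity `(id ⊗ ε_s)Δ(h) = (id ⊗ ε_s)((h⊗1)Δ(1))`. -/
lemma F4 (h : H) :
    LinearMap.lTensor H (xiS W) (W.comul h)
      = LinearMap.lTensor H (xiS W) ((h ⊗ₜ[k] (1:H)) * wE W) := by
  have hcomp : xiS W ∘ₗ rho W = xiS W := LinearMap.ext (eps_s_rho W)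
  calc LinearMap.lTensor H (xiS W) (W.comul h)
      = LinearMap.lTensor H (xiS W ∘ₗ rho W) (W.comul h) := by rw [hcomp]
    _ = LinearMap.lTensor H (xiS W) (LinearMap.lTensor H (rho W) (W.comul h)) := by
        rw [LinearMap.lTensor_comp]; rfl
    _ = LinearMap.lTensor H (xiS W) ((h ⊗ₜ[k] (1:H)) * wE W) := by rw [lT_rho_comul]

/-- the key weak-bialgebra identity `(ε_t ⊗ id)Δ(h) = (ε_t ⊗ id)(Δ(1)(1⊗h))`. -/
lemma F4' (h : H) :
    LinearMap.rTensor H (xiT W) (W.comul h)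
      = LinearMap.rTensor H (xiT W) (wE W * ((1:H) ⊗ₜ[k] h)) := by
  have hcomp : xiT W ∘ₗ lam W = xiT W := LinearMap.ext (eps_t_lam W)
  calc LinearMap.rTensor H (xiT W) (W.comul h)
      = LinearMap.rTensor H (xiT W ∘ₗ lam W) (W.comul h) := by rw [hcomp]
    _ = LinearMap.rTensor H (xiT W) (LinearMap.rTensor H (lam W) (W.comul h)) := by
        rw [LinearMap.rTensor_comp]; rfl
    _ = LinearMap.rTensor H (xiT W) (wE W * ((1:H) ⊗ₜ[k] h)) := by rw [rT_lam_comul]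

lemma eps_epsS (a c : H) : W.counit (xiS W a * c) = W.counit (a * c) := by
  have ax := W.counit_weak' a 1 c
  rw [mul_one, show W.comul (1:H) = wE W from rfl] at ax
  have gen : ∀ v : H ⊗[k] H,
      (LinearMap.mul' k k) ((TensorProduct.map W.counit W.counit)
        ((a ⊗ₜ[k] (1:H)) * ((TensorProduct.comm k H H) v) * ((1:H) ⊗ₜ[k] c)))
      = W.counit (cR W (((1:H) ⊗ₜ[k] a) * v) * c) := by
    intro v
    induction v using TensorProduct.induction_on with
    | zero => simp
    | tmul p q =>
      simp [Algebra.TensorProduct.tmul_mul_tmul, cR_apply, smul_mul_assoc, smul_eq_mul, mul_comm]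
    | add s t hs ht => simp only [add_tmul, tmul_add, map_add, add_mul, mul_add, hs, ht]
  rw [xiS_E, ← gen (wE W)]
  exact ax

lemma eps_epsT (c b : H) : W.counit (c * xiT W b) = W.counit (c * b) := by
  have ax := W.counit_weak' c 1 b
  rw [mul_one, show W.comul (1:H) = wE W from rfl] at ax
  have gen : ∀ v : H ⊗[k] H,
      (LinearMap.mul' k k) ((TensorProduct.map W.counit W.counit)
        ((c ⊗ₜ[k] (1:H)) * ((TensorProduct.comm k H H) v) * ((1:H) ⊗ₜ[k] b)))
      = W.counit (c * cL W (v * (b ⊗ₜ[k] (1:H)))) := by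
    intro v
    induction v using TensorProduct.induction_on with
    | zero => simp
    | tmul p q =>
      simp [Algebra.TensorProduct.tmul_mul_tmul, cL_apply, mul_smul_comm, smul_eq_mul, mul_comm]
    | add s t hs ht => simp only [add_tmul, tmul_add, map_add, add_mul, mul_add, hs, ht]
  rw [xiT_E, ← gen (wE W)]
  exact ax

lemma M2 (a b : H) : xiS W (xiS W a * b) = xiS W (a * b) := by
  rw [xiS_E W (xiS W a * b), xiS_E W (a * b)]
  have gen : ∀ v : H ⊗[k] H,
      cR W (((1:H) ⊗ₜ[k] (xiS W a * b)) * v) = cR W (((1:H) ⊗ₜ[k] (a * b)) * v) := by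
    intro v
    induction v using TensorProduct.induction_on with
    | zero => simp
    | tmul p q =>
      simp only [Algebra.TensorProduct.tmul_mul_tmul, one_mul, cR_apply]
      rw [mul_assoc, eps_epsS, ← mul_assoc]
    | add s t hs ht => simp only [add_tmul, tmul_add, map_add, add_mul, mul_add, hs, ht]
  exact gen (wE W)

lemma M2' (a b : H) : xiT W (a * xiT W b) = xiT W (a * b) := by
  rw [xiT_E W (a * xiT W b), xiT_E W (a * b)]
  have gen : ∀ v : H ⊗[k] H,
      cL W (v * ((a * xiT W b) ⊗ₜ[k] (1:H))) = cL W (v * ((a * b) ⊗ₜ[k] (1:H))) := by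
    intro v
    induction v using TensorProduct.induction_on with
    | zero => simp
    | tmul p q =>
      simp only [Algebra.TensorProduct.tmul_mul_tmul, mul_one, cL_apply]
      rw [← mul_assoc, eps_epsT, mul_assoc]
    | add s t hs ht => simp only [add_tmul, tmul_add, map_add, add_mul, mul_add, hs, ht]
  exact gen (wE W)

/-! ### contraction helpers -/

/-- `z ⊗ w ↦ ε(a w) • z`. -/
noncomputable def GammaL (a : H) : H ⊗[k] H →ₗ[k] H :=
  (TensorProduct.rid k H).toLinearMap ∘ₗ LinearMap.lTensor H (W.counit ∘ₗ LinearMap.mulLeft k a)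

/-- `w ⊗ z ↦ ε(w b) • z`. -/
noncomputable def GammaR (b : H) : H ⊗[k] H →ₗ[k] H :=
  (TensorProduct.lid k H).toLinearMap ∘ₗ LinearMap.rTensor H (W.counit ∘ₗ LinearMap.mulRight k b)

lemma GammaL_apply (a z w : H) : GammaL W a (z ⊗ₜ[k] w) = W.counit (a * w) • z := rfl
lemma GammaR_apply (b w z : H) : GammaR W b (w ⊗ₜ[k] z) = W.counit (w * b) • z := rfl

/-! ### commutation of the counital maps -/

lemma N5 (x y : H) : xiS W x * xiT W y = xiT W y * xiS W x := by
  set κ : (H ⊗[k] H) ⊗[k] H →ₗ[k] H := GammaL W x ∘ₗ LinearMap.rTensor H (GammaR W y) with hκ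
  have hL : ∀ u v : H ⊗[k] H,
      κ ((u ⊗ₜ[k] (1:H)) * ((TensorProduct.assoc k H H H).symm ((1:H) ⊗ₜ[k] v)))
        = cL W (u * (y ⊗ₜ[k] (1:H))) * cR W (((1:H) ⊗ₜ[k] x) * v) := by
    intro u v
    induction u using TensorProduct.induction_on with
    | zero => simp
    | tmul p q =>
      induction v using TensorProduct.induction_on with
      | zero => simp
      | tmul r s =>
        simp [hκ, Algebra.TensorProduct.tmul_mul_tmul, GammaL_apply, GammaR_apply,
          cL_apply, cR_apply, smul_mul_assoc, mul_smul_comm, smul_smul, mul_comm, mul_assoc]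
      | add s t hs ht => simp only [add_tmul, tmul_add, map_add, add_mul, mul_add, hs, ht]
    | add s t hs ht => simp only [add_tmul, tmul_add, map_add, add_mul, mul_add, hs, ht]
  have hR : ∀ u v : H ⊗[k] H,
      κ (((TensorProduct.assoc k H H H).symm ((1:H) ⊗ₜ[k] v)) * (u ⊗ₜ[k] (1:H)))
        = cR W (((1:H) ⊗ₜ[k] x) * v) * cL W (u * (y ⊗ₜ[k] (1:H))) := by
    intro u v
    induction u using TensorProduct.induction_on with
    | zero => simp
    | tmul p q =>
      induction v using TensorProduct.induction_on with
      | zero => simp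
      | tmul r s =>
        simp [hκ, Algebra.TensorProduct.tmul_mul_tmul, GammaL_apply, GammaR_apply,
          cL_apply, cR_apply, smul_mul_assoc, mul_smul_comm, smul_smul, mul_comm, mul_assoc]
      | add s t hs ht => simp only [add_tmul, tmul_add, map_add, add_mul, mul_add, hs, ht]
    | add s t hs ht => simp only [add_tmul, tmul_add, map_add, add_mul, mul_add, hs, ht]
  have e1 : xiT W y * xiS W x = κ (LinearMap.rTensor H W.comul (W.comul 1)) := by
    rw [show LinearMap.rTensor H W.comul (W.comul 1) = _ from W.comul_one_left]
    rw [xiT_E, xiS_E, ← hL (wE W) (wE W), wE_def]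
  have e2 : xiS W x * xiT W y = κ (LinearMap.rTensor H W.comul (W.comul 1)) := by
    rw [show LinearMap.rTensor H W.comul (W.comul 1) = _ from W.comul_one_right]
    rw [xiS_E, xiT_E, ← hR (wE W) (wE W), wE_def]
  rw [e1, e2]

/-! ### `ε_s ⋆ S = S` and `S ⋆ ε_t = S` -/

lemma N4' (h : H) :
    (LinearMap.mul' k H) ((TensorProduct.map (xiS W) W.antipode) (W.comul h))
      = W.antipode h := by
  have key : (TensorProduct.map (xiS W) W.antipode) (W.comul h)
      = (TensorProduct.map (mS W) W.antipode)
          ((LinearMap.rTensor H W.comul) (W.comul h)) := by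
    have : TensorProduct.map (xiS W) W.antipode
        = (TensorProduct.map (mS W) W.antipode) ∘ₗ (LinearMap.rTensor H W.comul) := by
      rw [show xiS W = mS W ∘ₗ W.comul from rfl, LinearMap.rTensor,
        ← TensorProduct.map_comp, LinearMap.comp_id]
    rw [this]; rfl
  rw [key]
  exact W.antipode_mid h

lemma N3' (h : H) :
    (LinearMap.mul' k H) ((TensorProduct.map W.antipode (xiT W)) (W.comul h))
      = W.antipode h := by
  have key : (TensorProduct.map W.antipode (xiT W)) (W.comul h)
      = (TensorProduct.map W.antipode (mT W))
          ((LinearMap.lTensor H W.comul) (W.comul h)) := by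
    have : TensorProduct.map W.antipode (xiT W)
        = (TensorProduct.map W.antipode (mT W)) ∘ₗ (LinearMap.lTensor H W.comul) := by
      rw [show xiT W = mT W ∘ₗ W.comul from rfl, LinearMap.lTensor,
        ← TensorProduct.map_comp, LinearMap.comp_id]
    rw [this]; rfl
  rw [key, ← W.coassoc h]
  have gen : ∀ z : (H ⊗[k] H) ⊗[k] H,
      (LinearMap.mul' k H) ((TensorProduct.map W.antipode (mT W))
        ((TensorProduct.assoc k H H H) z))
      = (LinearMap.mul' k H) ((TensorProduct.map (mS W) W.antipode) z) := by
    intro z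
    induction z using TensorProduct.induction_on with
    | zero => simp
    | tmul u c =>
      induction u using TensorProduct.induction_on with
      | zero => simp
      | tmul p q => simp [mS_apply, mT_apply, mul_assoc]
      | add s t hs ht => simp only [add_tmul, tmul_add, map_add, add_mul, mul_add, hs, ht]
    | add s t hs ht => simp only [add_tmul, tmul_add, map_add, add_mul, mul_add, hs, ht]
  rw [gen]
  exact W.antipode_mid h

/-! ### sandwich lemmas -/

/-- `u ⊗ v ↦ S(u) x v`. -/
noncomputable def sandS (x : H) : H ⊗[k] H →ₗ[k] H :=
  LinearMap.mul' k H ∘ₗ TensorProduct.map (LinearMap.mulRight k x ∘ₗ W.antipode) LinearMap.id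

/-- `u ⊗ v ↦ u x S(v)`. -/
noncomputable def sandT (x : H) : H ⊗[k] H →ₗ[k] H :=
  LinearMap.mul' k H ∘ₗ TensorProduct.map LinearMap.id (LinearMap.mulLeft k x ∘ₗ W.antipode)

lemma sandS_apply (x u v : H) : sandS W x (u ⊗ₜ[k] v) = W.antipode u * x * v := rfl
lemma sandT_apply (x u v : H) : sandT W x (u ⊗ₜ[k] v) = u * (x * W.antipode v) := rfl

lemma sandS_x_zero (u : H ⊗[k] H) : sandS W 0 u = 0 := by
  induction u using TensorProduct.induction_on with
  | zero => simp
  | tmul p q => simp [sandS_apply]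
  | add s t hs ht => simp only [map_add, hs, ht, add_zero]

lemma sandS_x_add (x x' : H) (u : H ⊗[k] H) :
    sandS W (x + x') u = sandS W x u + sandS W x' u := by
  induction u using TensorProduct.induction_on with
  | zero => simp
  | tmul p q => simp [sandS_apply, mul_add, add_mul]
  | add s t hs ht =>
      simp only [map_add, hs, ht]
      abel

lemma sandS_x_smul (c : k) (x : H) (u : H ⊗[k] H) :
    sandS W (c • x) u = c • sandS W x u := by
  induction u using TensorProduct.induction_on with
  | zero => simp
  | tmul p q => simp [sandS_apply, mul_smul_comm, smul_mul_assoc]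
  | add s t hs ht => simp only [map_add, hs, ht, smul_add]

lemma sandT_x_zero (u : H ⊗[k] H) : sandT W 0 u = 0 := by
  induction u using TensorProduct.induction_on with
  | zero => simp
  | tmul p q => simp [sandT_apply]
  | add s t hs ht => simp only [map_add, hs, ht, add_zero]

lemma sandT_x_add (x x' : H) (u : H ⊗[k] H) :
    sandT W (x + x') u = sandT W x u + sandT W x' u := by
  induction u using TensorProduct.induction_on with
  | zero => simp
  | tmul p q => simp [sandT_apply, mul_add, add_mul]
  | add s t hs ht =>
      simp only [map_add, hs, ht]
      abel

lemma sandT_x_smul (c : k) (x : H) (u : H ⊗[k] H) :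
    sandT W (c • x) u = c • sandT W x u := by
  induction u using TensorProduct.induction_on with
  | zero => simp
  | tmul p q => simp [sandT_apply, mul_smul_comm, smul_mul_assoc]
  | add s t hs ht => simp only [map_add, hs, ht, smul_add]


/-- `N1 : S(b₁) ε_s(a) b₂ = ε_s(ab)`. -/
lemma N1 (a b : H) : sandS W (xiS W a) (W.comul b) = xiS W (a * b) := by
  have hV : ((TensorProduct.assoc k H H H).symm ((1:H) ⊗ₜ[k] wE W)) * (W.comul b ⊗ₜ[k] (1:H))
      = LinearMap.rTensor H W.comul (wE W * (b ⊗ₜ[k] (1:H))) := by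
    rw [wE_def, rT_mul]
    rw [show LinearMap.rTensor H W.comul (W.comul 1) = _ from W.comul_one_right,
      show LinearMap.rTensor H W.comul (b ⊗ₜ[k] (1:H)) = W.comul b ⊗ₜ[k] (1:H) from rfl,
      mul_assoc, Algebra.TensorProduct.tmul_mul_tmul, ← W.comul_mul, one_mul, one_mul]
  have stepC : ∀ u v : H ⊗[k] H,
      sandS W (cR W (((1:H) ⊗ₜ[k] a) * v)) u
        = GammaL W a (LinearMap.rTensor H (mS W)
            (((TensorProduct.assoc k H H H).symm ((1:H) ⊗ₜ[k] v)) * (u ⊗ₜ[k] (1:H)))) := by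
    intro u v
    induction u using TensorProduct.induction_on with
    | zero => simp
    | tmul p q =>
      induction v using TensorProduct.induction_on with
      | zero => simp [sandS_x_zero]
      | tmul r s =>
        simp [Algebra.TensorProduct.tmul_mul_tmul, cR_apply, sandS_apply, GammaL_apply,
          mS_apply, sandS_x_smul, smul_mul_assoc, mul_smul_comm, map_smul, mul_assoc]
      | add s t hs ht => simp only [add_tmul, tmul_add, map_add, add_mul, mul_add, sandS_x_add (W := W), sandT_x_add (W := W), hs, ht]
    | add s t hs ht => simp only [add_tmul, tmul_add, map_add, add_mul, mul_add, sandS_x_add (W := W), sandT_x_add (W := W), hs, ht]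
  have stepD : ∀ v : H ⊗[k] H,
      GammaL W a (LinearMap.rTensor H (xiS W) (v * (b ⊗ₜ[k] (1:H))))
        = xiS W (cR W (((1:H) ⊗ₜ[k] a) * v) * b) := by
    intro v
    induction v using TensorProduct.induction_on with
    | zero => simp
    | tmul r s =>
      simp [Algebra.TensorProduct.tmul_mul_tmul, cR_apply, GammaL_apply,
        smul_mul_assoc, map_smul]
    | add s t hs ht => simp only [add_tmul, tmul_add, map_add, add_mul, mul_add, sandS_x_add (W := W), sandT_x_add (W := W), hs, ht]
  calc sandS W (xiS W a) (W.comul b)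
      = sandS W (cR W (((1:H) ⊗ₜ[k] a) * wE W)) (W.comul b) := by rw [← xiS_E]
    _ = GammaL W a (LinearMap.rTensor H (mS W)
          (((TensorProduct.assoc k H H H).symm ((1:H) ⊗ₜ[k] wE W)) * (W.comul b ⊗ₜ[k] (1:H)))) :=
        stepC (W.comul b) (wE W)
    _ = GammaL W a (LinearMap.rTensor H (mS W)
          (LinearMap.rTensor H W.comul (wE W * (b ⊗ₜ[k] (1:H))))) := by rw [hV]
    _ = GammaL W a (LinearMap.rTensor H (xiS W) (wE W * (b ⊗ₜ[k] (1:H)))) := by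
        rw [← LinearMap.rTensor_comp_apply]; rfl
    _ = xiS W (cR W (((1:H) ⊗ₜ[k] a) * wE W) * b) := stepD (wE W)
    _ = xiS W (xiS W a * b) := by rw [← xiS_E]
    _ = xiS W (a * b) := M2 W a b

/-- `N2 : a₁ ε_t(b) S(a₂) = ε_t(ab)`. -/
lemma N2 (a b : H) : sandT W (xiT W b) (W.comul a) = xiT W (a * b) := by
  have hV : ((1:H) ⊗ₜ[k] W.comul a) * ((TensorProduct.assoc k H H H) (wE W ⊗ₜ[k] (1:H)))
      = LinearMap.lTensor H W.comul (((1:H) ⊗ₜ[k] a) * wE W) := by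
    rw [wE_def, lT_mul]
    have h2 : LinearMap.lTensor H W.comul (W.comul 1)
        = ((1:H) ⊗ₜ[k] W.comul 1) * (TensorProduct.assoc k H H H) (W.comul 1 ⊗ₜ[k] (1:H)) := by
      rw [← W.coassoc 1, show LinearMap.rTensor H W.comul (W.comul 1) = _ from W.comul_one_right,
        assoc_mul]
      congr 1
      simp
    rw [show LinearMap.lTensor H W.comul ((1:H) ⊗ₜ[k] a) = (1:H) ⊗ₜ[k] W.comul a from rfl,
      h2, ← mul_assoc, Algebra.TensorProduct.tmul_mul_tmul, ← W.comul_mul, one_mul, mul_one]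
  have stepC : ∀ u v : H ⊗[k] H,
      sandT W (cL W (v * (b ⊗ₜ[k] (1:H)))) u
        = GammaR W b (LinearMap.lTensor H (mT W)
            (((1:H) ⊗ₜ[k] u) * ((TensorProduct.assoc k H H H) (v ⊗ₜ[k] (1:H))))) := by
    intro u v
    induction u using TensorProduct.induction_on with
    | zero => simp
    | tmul p q =>
      induction v using TensorProduct.induction_on with
      | zero => simp [sandT_x_zero]
      | tmul r s =>
        simp [Algebra.TensorProduct.tmul_mul_tmul, cL_apply, sandT_apply, GammaR_apply,
          mT_apply, sandT_x_smul, smul_mul_assoc, mul_smul_comm, map_smul, mul_assoc]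
      | add s t hs ht => simp only [add_tmul, tmul_add, map_add, add_mul, mul_add, sandS_x_add (W := W), sandT_x_add (W := W), hs, ht]
    | add s t hs ht => simp only [add_tmul, tmul_add, map_add, add_mul, mul_add, sandS_x_add (W := W), sandT_x_add (W := W), hs, ht]
  have stepD : ∀ v : H ⊗[k] H,
      GammaR W b (LinearMap.lTensor H (xiT W) (((1:H) ⊗ₜ[k] a) * v))
        = xiT W (a * cL W (v * (b ⊗ₜ[k] (1:H)))) := by
    intro v
    induction v using TensorProduct.induction_on with
    | zero => simp
    | tmul r s =>
      simp [Algebra.TensorProduct.tmul_mul_tmul, cL_apply, GammaR_apply,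
        mul_smul_comm, map_smul]
    | add s t hs ht => simp only [add_tmul, tmul_add, map_add, add_mul, mul_add, sandS_x_add (W := W), sandT_x_add (W := W), hs, ht]
  calc sandT W (xiT W b) (W.comul a)
      = sandT W (cL W (wE W * (b ⊗ₜ[k] (1:H)))) (W.comul a) := by rw [← xiT_E]
    _ = GammaR W b (LinearMap.lTensor H (mT W)
          (((1:H) ⊗ₜ[k] W.comul a) * ((TensorProduct.assoc k H H H) (wE W ⊗ₜ[k] (1:H))))) :=
        stepC (W.comul a) (wE W)
    _ = GammaR W b (LinearMap.lTensor H (mT W)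
          (LinearMap.lTensor H W.comul (((1:H) ⊗ₜ[k] a) * wE W))) := by rw [hV]
    _ = GammaR W b (LinearMap.lTensor H (xiT W) (((1:H) ⊗ₜ[k] a) * wE W)) := by
        rw [← LinearMap.lTensor_comp_apply]; rfl
    _ = xiT W (a * cL W (wE W * (b ⊗ₜ[k] (1:H)))) := stepD (wE W)
    _ = xiT W (a * xiT W b) := by rw [← xiT_E]
    _ = xiT W (a * b) := M2' W a b

/-! ### anti-multiplicativity of the antipode -/

/-- `F(a ⊗ b) = S(b) S(a)`. -/
noncomputable def Fm : H ⊗[k] H →ₗ[k] H :=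
  LinearMap.mul' k H ∘ₗ TensorProduct.map W.antipode W.antipode ∘ₗ
    (TensorProduct.comm k H H).toLinearMap

/-- `G(a ⊗ b) = S(ab)`. -/
noncomputable def Gm : H ⊗[k] H →ₗ[k] H := W.antipode ∘ₗ LinearMap.mul' k H

lemma Fm_apply (a b : H) : Fm W (a ⊗ₜ[k] b) = W.antipode b * W.antipode a := rfl
lemma Gm_apply (a b : H) : Gm W (a ⊗ₜ[k] b) = W.antipode (a * b) := rfl

/-- comultiplication of `H ⊗ H`. -/
noncomputable def DB : H ⊗[k] H →ₗ[k] (H ⊗[k] H) ⊗[k] (H ⊗[k] H) :=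
  (TensorProduct.tensorTensorTensorComm k H H H H).toLinearMap ∘ₗ
    TensorProduct.map W.comul W.comul

/-- convolution product on `Hom(H ⊗ H, H)`. -/
noncomputable def conv2 (f g : H ⊗[k] H →ₗ[k] H) : H ⊗[k] H →ₗ[k] H :=
  LinearMap.mul' k H ∘ₗ TensorProduct.map f g ∘ₗ DB W

lemma conv2_apply (f g : H ⊗[k] H →ₗ[k] H) (a b : H) :
    conv2 W f g (a ⊗ₜ[k] b)
      = LinearMap.mul' k H ((TensorProduct.map f g)
          ((TensorProduct.tensorTensorTensorComm k H H H H) (W.comul a ⊗ₜ[k] W.comul b))) := rfl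

/-- iterated comultiplication `(Δ ⊗ id)Δ`. -/
noncomputable def D2 : H →ₗ[k] (H ⊗[k] H) ⊗[k] H :=
  LinearMap.rTensor H W.comul ∘ₗ W.comul

/-- the regrouping `((a¹⊗a²)⊗a³)⊗((b¹⊗b²)⊗b³) ↦ ((a¹⊗b¹)⊗(a²⊗b²))⊗(a³⊗b³)`. -/
noncomputable def P3 :
    ((H ⊗[k] H) ⊗[k] H) ⊗[k] ((H ⊗[k] H) ⊗[k] H) →ₗ[k]
      ((H ⊗[k] H) ⊗[k] (H ⊗[k] H)) ⊗[k] (H ⊗[k] H) :=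
  LinearMap.rTensor (H ⊗[k] H)
      (TensorProduct.tensorTensorTensorComm k H H H H).toLinearMap ∘ₗ
    (TensorProduct.tensorTensorTensorComm k (H ⊗[k] H) H (H ⊗[k] H) H).toLinearMap

/-- triple convolution with explicit left grouping. -/
noncomputable def V3 (f g h : H ⊗[k] H →ₗ[k] H) : H ⊗[k] H →ₗ[k] H :=
  LinearMap.mul' k H ∘ₗ
    TensorProduct.map (LinearMap.mul' k H ∘ₗ TensorProduct.map f g) h ∘ₗ
    P3 ∘ₗ TensorProduct.map (D2 W) (D2 W)

lemma Assoc1 (f g h : H ⊗[k] H →ₗ[k] H) : conv2 W (conv2 W f g) h = V3 W f g h := by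
  have gen : ∀ u v : H ⊗[k] H,
      LinearMap.mul' k H ((TensorProduct.map (conv2 W f g) h)
        ((TensorProduct.tensorTensorTensorComm k H H H H) (u ⊗ₜ[k] v)))
      = LinearMap.mul' k H ((TensorProduct.map (LinearMap.mul' k H ∘ₗ TensorProduct.map f g) h)
          (P3 ((LinearMap.rTensor H W.comul u) ⊗ₜ[k] (LinearMap.rTensor H W.comul v)))) := by
    intro u v
    induction u using TensorProduct.induction_on with
    | zero => simp [P3]
    | tmul x y =>
      induction v using TensorProduct.induction_on with
      | zero => simp [P3]
      | tmul p q =>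
        simp [P3, conv2_apply, tensorTensorTensorComm_tmul]
      | add s t hs ht => simp only [add_tmul, tmul_add, map_add, add_mul, mul_add, hs, ht]
    | add s t hs ht => simp only [add_tmul, tmul_add, map_add, add_mul, mul_add, hs, ht]
  apply TensorProduct.ext'
  intro a b
  have lhs : conv2 W (conv2 W f g) h (a ⊗ₜ[k] b)
      = LinearMap.mul' k H ((TensorProduct.map (conv2 W f g) h)
        ((TensorProduct.tensorTensorTensorComm k H H H H) (W.comul a ⊗ₜ[k] W.comul b))) := rfl
  have rhs : V3 W f g h (a ⊗ₜ[k] b)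
      = LinearMap.mul' k H ((TensorProduct.map (LinearMap.mul' k H ∘ₗ TensorProduct.map f g) h)
          (P3 ((LinearMap.rTensor H W.comul (W.comul a)) ⊗ₜ[k]
            (LinearMap.rTensor H W.comul (W.comul b))))) := rfl
  rw [lhs, rhs, gen]

lemma Assoc2 (f g h : H ⊗[k] H →ₗ[k] H) : conv2 W f (conv2 W g h) = V3 W f g h := by
  have inner : ∀ (x p : H) (w z : H ⊗[k] H),
      f (x ⊗ₜ[k] p) * LinearMap.mul' k H ((TensorProduct.map g h)
        ((TensorProduct.tensorTensorTensorComm k H H H H) (w ⊗ₜ[k] z)))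
      = LinearMap.mul' k H ((TensorProduct.map (LinearMap.mul' k H ∘ₗ TensorProduct.map f g) h)
          (P3 (((TensorProduct.assoc k H H H).symm (x ⊗ₜ[k] w)) ⊗ₜ[k]
            ((TensorProduct.assoc k H H H).symm (p ⊗ₜ[k] z))))) := by
    intro x p w z
    induction w using TensorProduct.induction_on with
    | zero => simp [P3]
    | tmul y1 y2 =>
      induction z using TensorProduct.induction_on with
      | zero => simp [P3]
      | tmul q1 q2 =>
        simp [P3, tensorTensorTensorComm_tmul, mul_assoc]
      | add s t hs ht => simp only [add_tmul, tmul_add, map_add, add_mul, mul_add, hs, ht]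
    | add s t hs ht => simp only [add_tmul, tmul_add, map_add, add_mul, mul_add, hs, ht]
  have gen : ∀ u v : H ⊗[k] H,
      LinearMap.mul' k H ((TensorProduct.map f (conv2 W g h))
        ((TensorProduct.tensorTensorTensorComm k H H H H) (u ⊗ₜ[k] v)))
      = LinearMap.mul' k H ((TensorProduct.map (LinearMap.mul' k H ∘ₗ TensorProduct.map f g) h)
          (P3 (((TensorProduct.assoc k H H H).symm (LinearMap.lTensor H W.comul u)) ⊗ₜ[k]
            ((TensorProduct.assoc k H H H).symm (LinearMap.lTensor H W.comul v))))) := by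
    intro u v
    induction u using TensorProduct.induction_on with
    | zero => simp [P3]
    | tmul x y =>
      induction v using TensorProduct.induction_on with
      | zero => simp [P3]
      | tmul p q =>
        have : LinearMap.mul' k H ((TensorProduct.map f (conv2 W g h))
            ((TensorProduct.tensorTensorTensorComm k H H H H) ((x ⊗ₜ[k] y) ⊗ₜ[k] (p ⊗ₜ[k] q))))
            = f (x ⊗ₜ[k] p) * LinearMap.mul' k H ((TensorProduct.map g h)
              ((TensorProduct.tensorTensorTensorComm k H H H H)
                (W.comul y ⊗ₜ[k] W.comul q))) := by
          simp [conv2_apply, tensorTensorTensorComm_tmul]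
        rw [this, inner x p (W.comul y) (W.comul q)]
        rfl
      | add s t hs ht => simp only [add_tmul, tmul_add, map_add, add_mul, mul_add, hs, ht]
    | add s t hs ht => simp only [add_tmul, tmul_add, map_add, add_mul, mul_add, hs, ht]
  apply TensorProduct.ext'
  intro a b
  have lhs : conv2 W f (conv2 W g h) (a ⊗ₜ[k] b)
      = LinearMap.mul' k H ((TensorProduct.map f (conv2 W g h))
        ((TensorProduct.tensorTensorTensorComm k H H H H) (W.comul a ⊗ₜ[k] W.comul b))) := rfl
  have coas : ∀ c : H, (TensorProduct.assoc k H H H).symm (LinearMap.lTensor H W.comul (W.comul c))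
      = LinearMap.rTensor H W.comul (W.comul c) := by
    intro c
    rw [← W.coassoc c, LinearEquiv.symm_apply_apply]
  have rhs : V3 W f g h (a ⊗ₜ[k] b)
      = LinearMap.mul' k H ((TensorProduct.map (LinearMap.mul' k H ∘ₗ TensorProduct.map f g) h)
          (P3 ((LinearMap.rTensor H W.comul (W.comul a)) ⊗ₜ[k]
            (LinearMap.rTensor H W.comul (W.comul b))))) := rfl
  rw [lhs, gen, coas, coas, rhs]

lemma GM_gen (u v : H ⊗[k] H) :
    LinearMap.mul' k H ((TensorProduct.map (Gm W) (LinearMap.mul' k H))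
      ((TensorProduct.tensorTensorTensorComm k H H H H) (u ⊗ₜ[k] v)))
    = mS W (u * v) := by
  induction u using TensorProduct.induction_on with
  | zero => simp
  | tmul x y =>
    induction v using TensorProduct.induction_on with
    | zero => simp
    | tmul p q =>
      simp [tensorTensorTensorComm_tmul, Gm_apply, mS_apply,
        Algebra.TensorProduct.tmul_mul_tmul]
    | add s t hs ht => simp only [add_tmul, tmul_add, map_add, add_mul, mul_add, hs, ht]
  | add s t hs ht => simp only [add_tmul, tmul_add, map_add, add_mul, mul_add, hs, ht]

lemma MG_gen (u v : H ⊗[k] H) :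
    LinearMap.mul' k H ((TensorProduct.map (LinearMap.mul' k H) (Gm W))
      ((TensorProduct.tensorTensorTensorComm k H H H H) (u ⊗ₜ[k] v)))
    = mT W (u * v) := by
  induction u using TensorProduct.induction_on with
  | zero => simp
  | tmul x y =>
    induction v using TensorProduct.induction_on with
    | zero => simp
    | tmul p q =>
      simp [tensorTensorTensorComm_tmul, Gm_apply, mT_apply,
        Algebra.TensorProduct.tmul_mul_tmul]
    | add s t hs ht => simp only [add_tmul, tmul_add, map_add, add_mul, mul_add, hs, ht]
  | add s t hs ht => simp only [add_tmul, tmul_add, map_add, add_mul, mul_add, hs, ht]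

lemma FM_gen (u v : H ⊗[k] H) :
    LinearMap.mul' k H ((TensorProduct.map (Fm W) (LinearMap.mul' k H))
      ((TensorProduct.tensorTensorTensorComm k H H H H) (u ⊗ₜ[k] v)))
    = sandS W (mS W u) v := by
  induction u using TensorProduct.induction_on with
  | zero => simp [sandS_x_zero]
  | tmul x y =>
    induction v using TensorProduct.induction_on with
    | zero => simp
    | tmul p q =>
      simp [tensorTensorTensorComm_tmul, Fm_apply, mS_apply, sandS_apply, mul_assoc]
    | add s t hs ht => simp only [add_tmul, tmul_add, map_add, add_mul, mul_add, hs, ht]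
  | add s t hs ht =>
      simp only [add_tmul, tmul_add, map_add, add_mul, mul_add, hs, ht, sandS_x_add]

lemma MF_gen (u v : H ⊗[k] H) :
    LinearMap.mul' k H ((TensorProduct.map (LinearMap.mul' k H) (Fm W))
      ((TensorProduct.tensorTensorTensorComm k H H H H) (u ⊗ₜ[k] v)))
    = sandT W (mT W v) u := by
  induction u using TensorProduct.induction_on with
  | zero => simp
  | tmul x y =>
    induction v using TensorProduct.induction_on with
    | zero => simp [sandT_x_zero]
    | tmul p q =>
      simp [tensorTensorTensorComm_tmul, Fm_apply, mT_apply, sandT_apply, mul_assoc]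
    | add s t hs ht =>
        simp only [add_tmul, tmul_add, map_add, add_mul, mul_add, hs, ht]
        exact (sandT_x_add W _ _ _).symm
  | add s t hs ht => simp only [add_tmul, tmul_add, map_add, add_mul, mul_add, hs, ht]

lemma conv2_G_M : conv2 W (Gm W) (LinearMap.mul' k H) = xiS W ∘ₗ LinearMap.mul' k H := by
  apply TensorProduct.ext'
  intro a b
  rw [conv2_apply, GM_gen, ← W.comul_mul]
  rfl

lemma conv2_M_G : conv2 W (LinearMap.mul' k H) (Gm W) = xiT W ∘ₗ LinearMap.mul' k H := by
  apply TensorProduct.ext'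
  intro a b
  rw [conv2_apply, MG_gen, ← W.comul_mul]
  rfl

lemma conv2_F_M : conv2 W (Fm W) (LinearMap.mul' k H) = xiS W ∘ₗ LinearMap.mul' k H := by
  apply TensorProduct.ext'
  intro a b
  rw [conv2_apply, FM_gen]
  have : mS W (W.comul a) = xiS W a := rfl
  rw [this, N1]
  rfl

lemma conv2_M_F : conv2 W (LinearMap.mul' k H) (Fm W) = xiT W ∘ₗ LinearMap.mul' k H := by
  apply TensorProduct.ext'
  intro a b
  rw [conv2_apply, MF_gen]
  have : mT W (W.comul b) = xiT W b := rfl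
  rw [this, N2]
  rfl

lemma C2gen (x y : (H ⊗[k] H) ⊗[k] H) :
    LinearMap.mul' k H
      ((TensorProduct.map (LinearMap.mul' k H ∘ₗ TensorProduct.map (Gm W) (LinearMap.mul' k H))
        (Gm W)) (P3 (x ⊗ₜ[k] y)))
    = LinearMap.mul' k H ((TensorProduct.map (mS W) W.antipode) (x * y)) := by
  induction x using TensorProduct.induction_on with
  | zero => simp [P3]
  | tmul u c =>
    induction y using TensorProduct.induction_on with
    | zero => simp [P3]
    | tmul v d =>
      have hP : P3 ((u ⊗ₜ[k] c) ⊗ₜ[k] (v ⊗ₜ[k] d))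
          = ((TensorProduct.tensorTensorTensorComm k H H H H) (u ⊗ₜ[k] v)) ⊗ₜ[k] (c ⊗ₜ[k] d) := by
        simp [P3, tensorTensorTensorComm_tmul]
      rw [hP, Algebra.TensorProduct.tmul_mul_tmul]
      simp only [map_tmul, LinearMap.mul'_apply, LinearMap.coe_comp, Function.comp_apply]
      rw [GM_gen]
      rfl
    | add s t hs ht => simp only [add_tmul, tmul_add, map_add, add_mul, mul_add, hs, ht]
  | add s t hs ht => simp only [add_tmul, tmul_add, map_add, add_mul, mul_add, hs, ht]

lemma V3_GMG : V3 W (Gm W) (LinearMap.mul' k H) (Gm W) = Gm W := by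
  apply TensorProduct.ext'
  intro a b
  have lhs : V3 W (Gm W) (LinearMap.mul' k H) (Gm W) (a ⊗ₜ[k] b)
      = LinearMap.mul' k H
        ((TensorProduct.map (LinearMap.mul' k H ∘ₗ TensorProduct.map (Gm W) (LinearMap.mul' k H))
          (Gm W)) (P3 ((D2 W a) ⊗ₜ[k] (D2 W b)))) := rfl
  rw [lhs, C2gen]
  have hD : D2 W a * D2 W b = LinearMap.rTensor H W.comul (W.comul (a * b)) := by
    show LinearMap.rTensor H W.comul (W.comul a) * LinearMap.rTensor H W.comul (W.comul b) = _
    rw [← rT_mul, ← W.comul_mul]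
  rw [hD]
  exact W.antipode_mid (a * b)

/-- `(z⊗w)⊗(y₁⊗y₂) ↦ (S(y₁)z)(y₂S(w))`. -/
noncomputable def Qq : (H ⊗[k] H) ⊗[k] (H ⊗[k] H) →ₗ[k] H :=
  LinearMap.mul' k H ∘ₗ
    TensorProduct.map
      (LinearMap.mul' k H ∘ₗ (TensorProduct.comm k H H).toLinearMap ∘ₗ
        TensorProduct.map LinearMap.id W.antipode)
      (LinearMap.mul' k H ∘ₗ (TensorProduct.comm k H H).toLinearMap ∘ₗ
        TensorProduct.map W.antipode LinearMap.id) ∘ₗ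
    (TensorProduct.tensorTensorTensorComm k H H H H).toLinearMap

lemma Qq_apply (z w y1 y2 : H) :
    Qq W ((z ⊗ₜ[k] w) ⊗ₜ[k] (y1 ⊗ₜ[k] y2))
      = (W.antipode y1 * z) * (y2 * W.antipode w) := by
  simp [Qq, tensorTensorTensorComm_tmul]

/-- `(z⊗w)⊗(y₁⊗y₂) ↦ (S(y₁)y₂)(zS(w))`. -/
noncomputable def Qq2 : (H ⊗[k] H) ⊗[k] (H ⊗[k] H) →ₗ[k] H :=
  LinearMap.mul' k H ∘ₗ TensorProduct.map (mS W) (mT W) ∘ₗ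
    (TensorProduct.comm k (H ⊗[k] H) (H ⊗[k] H)).toLinearMap

lemma Qq2_apply (X Y : H ⊗[k] H) :
    Qq2 W (X ⊗ₜ[k] Y) = mS W Y * mT W X := by
  simp [Qq2]

lemma A1gen (x y : (H ⊗[k] H) ⊗[k] H) :
    LinearMap.mul' k H
      ((TensorProduct.map (LinearMap.mul' k H ∘ₗ TensorProduct.map (Fm W) (LinearMap.mul' k H))
        (Fm W)) (P3 (x ⊗ₜ[k] y)))
    = Qq W ((LinearMap.rTensor H (mS W) x) ⊗ₜ[k]
        (LinearMap.lTensor H (mT W) ((TensorProduct.assoc k H H H) y))) := by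
  induction x using TensorProduct.induction_on with
  | zero => simp [P3]
  | tmul u c =>
    induction y using TensorProduct.induction_on with
    | zero => simp [P3]
    | tmul v d =>
      induction v using TensorProduct.induction_on with
      | zero => simp [P3]
      | tmul r s =>
        have hP : P3 ((u ⊗ₜ[k] c) ⊗ₜ[k] ((r ⊗ₜ[k] s) ⊗ₜ[k] d))
            = ((TensorProduct.tensorTensorTensorComm k H H H H) (u ⊗ₜ[k] (r ⊗ₜ[k] s)))
                ⊗ₜ[k] (c ⊗ₜ[k] d) := by
          simp [P3, tensorTensorTensorComm_tmul]
        rw [hP]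
        simp only [map_tmul, LinearMap.mul'_apply, LinearMap.coe_comp, Function.comp_apply]
        rw [FM_gen]
        have hA : (TensorProduct.assoc k H H H) ((r ⊗ₜ[k] s) ⊗ₜ[k] d) = r ⊗ₜ[k] (s ⊗ₜ[k] d) := rfl
        rw [hA]
        simp only [LinearMap.rTensor_tmul, LinearMap.lTensor_tmul, mT_apply]
        rw [Qq_apply, sandS_apply, Fm_apply]
        simp [mul_assoc]
      | add s t hs ht => simp only [add_tmul, tmul_add, map_add, add_mul, mul_add, hs, ht]
    | add s t hs ht => simp only [add_tmul, tmul_add, map_add, add_mul, mul_add, hs, ht]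
  | add s t hs ht => simp only [add_tmul, tmul_add, map_add, add_mul, mul_add, hs, ht]

lemma step2 (u v : H ⊗[k] H) :
    Qq W ((LinearMap.rTensor H (xiS W) u) ⊗ₜ[k] (LinearMap.lTensor H (xiT W) v))
      = Qq2 W ((LinearMap.rTensor H (xiS W) u) ⊗ₜ[k] (LinearMap.lTensor H (xiT W) v)) := by
  induction u using TensorProduct.induction_on with
  | zero => simp
  | tmul p q =>
    induction v using TensorProduct.induction_on with
    | zero => simp
    | tmul r s =>
      simp only [LinearMap.rTensor_tmul, LinearMap.lTensor_tmul]
      rw [Qq_apply, Qq2_apply, mS_apply, mT_apply]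
      rw [mul_assoc, mul_assoc, ← mul_assoc (xiS W p), N5, mul_assoc]
    | add s t hs ht => simp only [add_tmul, tmul_add, map_add, add_mul, mul_add, hs, ht]
  | add s t hs ht => simp only [add_tmul, tmul_add, map_add, add_mul, mul_add, hs, ht]

lemma V3_FMF : V3 W (Fm W) (LinearMap.mul' k H) (Fm W) = Fm W := by
  apply TensorProduct.ext'
  intro a b
  have lhs : V3 W (Fm W) (LinearMap.mul' k H) (Fm W) (a ⊗ₜ[k] b)
      = LinearMap.mul' k H
        ((TensorProduct.map (LinearMap.mul' k H ∘ₗ TensorProduct.map (Fm W) (LinearMap.mul' k H))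
          (Fm W)) (P3 ((D2 W a) ⊗ₜ[k] (D2 W b)))) := rfl
  rw [lhs, A1gen]
  have h1 : LinearMap.rTensor H (mS W) (D2 W a)
      = LinearMap.rTensor H (xiS W) (W.comul a) := by
    show LinearMap.rTensor H (mS W) (LinearMap.rTensor H W.comul (W.comul a)) = _
    rw [← LinearMap.rTensor_comp_apply]
    rfl
  have h2 : LinearMap.lTensor H (mT W) ((TensorProduct.assoc k H H H) (D2 W b))
      = LinearMap.lTensor H (xiT W) (W.comul b) := by
    show LinearMap.lTensor H (mT W)
        ((TensorProduct.assoc k H H H) (LinearMap.rTensor H W.comul (W.comul b))) = _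
    rw [W.coassoc b, ← LinearMap.lTensor_comp_apply]
    rfl
  rw [h1, h2, step2, Qq2_apply]
  have h3 : mS W (LinearMap.lTensor H (xiT W) (W.comul b)) = W.antipode b := by
    have e : TensorProduct.map W.antipode (xiT W)
        = TensorProduct.map W.antipode LinearMap.id ∘ₗ LinearMap.lTensor H (xiT W) := by
      rw [LinearMap.lTensor, ← TensorProduct.map_comp, LinearMap.comp_id, LinearMap.id_comp]
    have h := N3' W b
    rw [e] at h
    exact h
  have h4 : mT W (LinearMap.rTensor H (xiS W) (W.comul a)) = W.antipode a := by
    have e : TensorProduct.map (xiS W) W.antipode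
        = TensorProduct.map LinearMap.id W.antipode ∘ₗ LinearMap.rTensor H (xiS W) := by
      rw [LinearMap.rTensor, ← TensorProduct.map_comp, LinearMap.comp_id, LinearMap.id_comp]
    have h := N4' W a
    rw [e] at h
    exact h
  rw [h3, h4]
  rfl

lemma Fm_eq_Gm : Fm W = Gm W := by
  have h1 : conv2 W (Fm W) (LinearMap.mul' k H) = conv2 W (Gm W) (LinearMap.mul' k H) := by
    rw [conv2_F_M, conv2_G_M]
  have h2 : conv2 W (LinearMap.mul' k H) (Fm W) = conv2 W (LinearMap.mul' k H) (Gm W) := by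
    rw [conv2_M_F, conv2_M_G]
  calc Fm W = V3 W (Fm W) (LinearMap.mul' k H) (Fm W) := (V3_FMF W).symm
    _ = conv2 W (Fm W) (conv2 W (LinearMap.mul' k H) (Fm W)) := (Assoc2 W _ _ _).symm
    _ = conv2 W (Fm W) (conv2 W (LinearMap.mul' k H) (Gm W)) := by rw [h2]
    _ = V3 W (Fm W) (LinearMap.mul' k H) (Gm W) := Assoc2 W _ _ _
    _ = conv2 W (conv2 W (Fm W) (LinearMap.mul' k H)) (Gm W) := (Assoc1 W _ _ _).symm
    _ = conv2 W (conv2 W (Gm W) (LinearMap.mul' k H)) (Gm W) := by rw [h1]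
    _ = V3 W (Gm W) (LinearMap.mul' k H) (Gm W) := Assoc1 W _ _ _
    _ = Gm W := V3_GMG W

/-- **Anti-multiplicativity of the antipode.** -/
lemma antipode_mul (a b : H) : W.antipode (a * b) = W.antipode b * W.antipode a := by
  have := DFunLike.congr_fun (Fm_eq_Gm W) (a ⊗ₜ[k] b)
  rw [Fm_apply, Gm_apply] at this
  exact this.symm

/-! ### the Casimir element of a left integral -/

section Integral

variable (L : H)

lemma antimult_lift (x y : H) (w : H ⊗[k] H) :
    LinearMap.lTensor H W.antipode ((x ⊗ₜ[k] y) * w)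
      = ((x ⊗ₜ[k] (1:H)) * LinearMap.lTensor H W.antipode w) * ((1:H) ⊗ₜ[k] W.antipode y) := by
  induction w using TensorProduct.induction_on with
  | zero => simp
  | tmul u v =>
    simp only [Algebra.TensorProduct.tmul_mul_tmul, LinearMap.lTensor_tmul]
    rw [antipode_mul]
    simp [mul_assoc]
  | add s t hs ht => simp only [add_tmul, tmul_add, map_add, add_mul, mul_add, hs, ht]

/-- `Φ(x ⊗ y) = (id ⊗ S)(Δ(xΛ)) · (1 ⊗ y)`. -/
noncomputable def PhiL : H ⊗[k] H →ₗ[k] H ⊗[k] H :=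
  TensorProduct.lift (LinearMap.mk₂ k
    (fun x y => (LinearMap.lTensor H W.antipode (W.comul (x * L))) * ((1:H) ⊗ₜ[k] y))
    (by intro x x' y; rw [add_mul, map_add, map_add, add_mul])
    (by intro c x y; rw [smul_mul_assoc, map_smul, map_smul, smul_mul_assoc])
    (by intro x y y'; rw [tmul_add, mul_add])
    (by intro c x y; rw [tmul_smul, mul_smul_comm]))

lemma PhiL_apply (x y : H) :
    PhiL W L (x ⊗ₜ[k] y)
      = (LinearMap.lTensor H W.antipode (W.comul (x * L))) * ((1:H) ⊗ₜ[k] y) := rfl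

/-- `W₂(u ⊗ y) = (id ⊗ S)(u · ΔΛ) · (1 ⊗ y)`. -/
noncomputable def W2 : (H ⊗[k] H) ⊗[k] H →ₗ[k] H ⊗[k] H :=
  TensorProduct.lift (LinearMap.mk₂ k
    (fun u y => (LinearMap.lTensor H W.antipode (u * W.comul L)) * ((1:H) ⊗ₜ[k] y))
    (by intro u u' y; rw [add_mul, map_add, add_mul])
    (by intro c u y; rw [smul_mul_assoc, map_smul, smul_mul_assoc])
    (by intro u y y'; rw [tmul_add, mul_add])
    (by intro c u y; rw [tmul_smul, mul_smul_comm]))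

lemma W2_apply (u : H ⊗[k] H) (y : H) :
    W2 W L (u ⊗ₜ[k] y)
      = (LinearMap.lTensor H W.antipode (u * W.comul L)) * ((1:H) ⊗ₜ[k] y) := rfl

/-- `Ψ(a ⊗ t) = (a ⊗ 1) C (1 ⊗ t)`. -/
noncomputable def PsiL : H ⊗[k] H →ₗ[k] H ⊗[k] H :=
  TensorProduct.lift (LinearMap.mk₂ k
    (fun a t => ((a ⊗ₜ[k] (1:H)) * casimirC W L) * ((1:H) ⊗ₜ[k] t))
    (by intro a a' t; rw [add_tmul, add_mul, add_mul])
    (by intro c a t; rw [← smul_tmul', smul_mul_assoc, smul_mul_assoc])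
    (by intro a t t'; rw [tmul_add, mul_add])
    (by intro c a t; rw [tmul_smul, mul_smul_comm]))

lemma PsiL_apply (a t : H) :
    PsiL W L (a ⊗ₜ[k] t) = ((a ⊗ₜ[k] (1:H)) * casimirC W L) * ((1:H) ⊗ₜ[k] t) := rfl

lemma PhiL_eq_W2 (v : H ⊗[k] H) :
    PhiL W L v = W2 W L (LinearMap.rTensor H W.comul v) := by
  induction v using TensorProduct.induction_on with
  | zero => simp
  | tmul x y => rw [PhiL_apply, LinearMap.rTensor_tmul, W2_apply, W.comul_mul]
  | add s t hs ht => simp only [map_add, hs, ht]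

lemma PhiL_mulright (u : H ⊗[k] H) (h : H) :
    PhiL W L (u * ((1:H) ⊗ₜ[k] h)) = PhiL W L u * ((1:H) ⊗ₜ[k] h) := by
  induction u using TensorProduct.induction_on with
  | zero => simp
  | tmul x y =>
    rw [Algebra.TensorProduct.tmul_mul_tmul, mul_one, PhiL_apply, PhiL_apply, mul_assoc,
      Algebra.TensorProduct.tmul_mul_tmul, one_mul]
  | add s t hs ht => simp only [add_mul, map_add, hs, ht]

variable (hL : ∀ h : H, h * L = epsT W.toWeakBialgebraData h * L)

include hL in
lemma PhiL_absorb (u : H ⊗[k] H) :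
    PhiL W L (LinearMap.rTensor H (xiT W) u) = PhiL W L u := by
  induction u using TensorProduct.induction_on with
  | zero => simp
  | tmul x y =>
    rw [LinearMap.rTensor_tmul, PhiL_apply, PhiL_apply, xiT_apply, ← hL x]
  | add s t hs ht => simp only [map_add, hs, ht]

include hL in
/-- eval-right: `Φ(Δh) = Φ(E)·(1⊗h)`. -/
lemma PhiL_comul_right (h : H) :
    PhiL W L (W.comul h) = PhiL W L (wE W) * ((1:H) ⊗ₜ[k] h) := by
  rw [← PhiL_absorb W L hL (W.comul h), F4', PhiL_absorb W L hL, PhiL_mulright]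

lemma K4gen (u v : H ⊗[k] H) :
    W2 W L (((TensorProduct.assoc k H H H).symm ((1:H) ⊗ₜ[k] v)) * (u ⊗ₜ[k] (1:H)))
      = (LinearMap.lTensor H W.antipode (u * W.comul L)) * ((1:H) ⊗ₜ[k] (mS W v)) := by
  induction u using TensorProduct.induction_on with
  | zero => simp
  | tmul p q =>
    induction v using TensorProduct.induction_on with
    | zero => simp
    | tmul r s =>
      rw [show (TensorProduct.assoc k H H H).symm ((1:H) ⊗ₜ[k] (r ⊗ₜ[k] s))
          = ((1:H) ⊗ₜ[k] r) ⊗ₜ[k] s from rfl,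
        Algebra.TensorProduct.tmul_mul_tmul, mul_one, W2_apply, mS_apply,
        Algebra.TensorProduct.tmul_mul_tmul, one_mul]
      rw [antimult_lift W, antimult_lift W]
      rw [antipode_mul]
      simp only [mul_assoc, Algebra.TensorProduct.tmul_mul_tmul, one_mul]
    | add s t hs ht => simp only [add_tmul, tmul_add, map_add, add_mul, mul_add, hs, ht]
  | add s t hs ht => simp only [add_tmul, tmul_add, map_add, add_mul, mul_add, hs, ht]

lemma PhiL_E : PhiL W L (wE W) = casimirC W L := by
  rw [PhiL_eq_W2, wE_def,
    show LinearMap.rTensor H W.comul (W.comul 1) = _ from W.comul_one_right, ← wE_def, K4gen,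
    mS_E]
  rw [← Algebra.TensorProduct.one_def, mul_one, E_mul_comul]
  rfl

lemma W2_assoc_symm (z : H ⊗[k] (H ⊗[k] H)) :
    W2 W L ((TensorProduct.assoc k H H H).symm z)
      = PsiL W L (LinearMap.lTensor H (mS W) z) := by
  induction z using TensorProduct.induction_on with
  | zero => simp
  | tmul x w =>
    induction w using TensorProduct.induction_on with
    | zero => simp
    | tmul y1 y2 =>
      rw [show (TensorProduct.assoc k H H H).symm (x ⊗ₜ[k] (y1 ⊗ₜ[k] y2))
          = (x ⊗ₜ[k] y1) ⊗ₜ[k] y2 from rfl, W2_apply, LinearMap.lTensor_tmul, mS_apply,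
        PsiL_apply, antimult_lift W]
      rw [casimirC, mul_assoc (x ⊗ₜ[k] (1:H) * LinearMap.lTensor H W.antipode (W.comul L)),
        Algebra.TensorProduct.tmul_mul_tmul, one_mul]
    | add s t hs ht => simp only [add_tmul, tmul_add, map_add, add_mul, mul_add, hs, ht]
  | add s t hs ht => simp only [add_tmul, tmul_add, map_add, add_mul, mul_add, hs, ht]

lemma PsiL_left (h : H) (v : H ⊗[k] H) :
    PsiL W L (LinearMap.lTensor H (xiS W) ((h ⊗ₜ[k] (1:H)) * v))
      = (h ⊗ₜ[k] (1:H)) * PsiL W L (LinearMap.lTensor H (xiS W) v) := by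
  induction v using TensorProduct.induction_on with
  | zero => simp
  | tmul p q =>
    rw [Algebra.TensorProduct.tmul_mul_tmul, one_mul, LinearMap.lTensor_tmul,
      LinearMap.lTensor_tmul, PsiL_apply, PsiL_apply]
    rw [← mul_assoc, ← mul_assoc, Algebra.TensorProduct.tmul_mul_tmul, one_mul]
  | add s t hs ht => simp only [add_tmul, tmul_add, map_add, add_mul, mul_add, hs, ht]

/-- eval-left: `Φ(Δh) = (h⊗1)·Φ(E)`. -/
lemma PhiL_comul_left (h : H) :
    PhiL W L (W.comul h) = (h ⊗ₜ[k] (1:H)) * PhiL W L (wE W) := by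
  have main : ∀ g : H, PhiL W L (W.comul g)
      = PsiL W L (LinearMap.lTensor H (xiS W) ((g ⊗ₜ[k] (1:H)) * wE W)) := by
    intro g
    rw [PhiL_eq_W2]
    have co : LinearMap.rTensor H W.comul (W.comul g)
        = (TensorProduct.assoc k H H H).symm (LinearMap.lTensor H W.comul (W.comul g)) := by
      rw [← W.coassoc g, LinearEquiv.symm_apply_apply]
    rw [co, W2_assoc_symm]
    have e : LinearMap.lTensor H (mS W) (LinearMap.lTensor H W.comul (W.comul g))
        = LinearMap.lTensor H (xiS W) (W.comul g) := by
      rw [← LinearMap.lTensor_comp_apply]; rfl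
    rw [e, F4]
  rw [main h, PsiL_left]
  have h1 : PhiL W L (wE W) = PsiL W L (LinearMap.lTensor H (xiS W) (wE W)) := by
    have := main 1
    rw [show W.comul (1:H) = wE W from rfl] at this
    rw [this]
    congr 1
    rw [← Algebra.TensorProduct.one_def, one_mul]
  rw [h1]

include hL in
/-- **KEY**: `(h ⊗ 1) C = C (1 ⊗ h)`. -/
lemma key_commute (h : H) :
    (h ⊗ₜ[k] (1:H)) * casimirC W L = casimirC W L * ((1:H) ⊗ₜ[k] h) := by
  have l := PhiL_comul_left W L h
  have r := PhiL_comul_right W L hL h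
  rw [PhiL_E] at l r
  rw [← l, r]

end Integral

end WHAux

set_option synthInstance.maxHeartbeats 400000 in
set_option maxHeartbeats 1000000 in
/-- Let `H` be a finite-dimensional weak Hopf algebra with a nonzero left
integral `Λ`.  Then `Δ_Λ(h) = Λ₁ ⊗ S(Λ₂)h` is a coassociative comultiplication on `H` which is
a morphism of `H`-bimodules (`(id ⊗ m)(Δ_Λ ⊗ id) = Δ_Λ m = (m ⊗ id)(id ⊗ Δ_Λ)`); hence `H` is
a non-counital Frobenius algebra. -/
theorem weak_hopf_noncounital_frobenius
    (k H : Type*) [Field k] [Ring H] [Algebra k H] [FiniteDimensional k H]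
    (W : WeakHopfData k H) (Λ : H) (hΛne : Λ ≠ 0)
    (hΛ : ∀ h : H, h * Λ = epsT W.toWeakBialgebraData h * Λ) :
    (∀ h : H,
      (TensorProduct.assoc k H H H)
          ((LinearMap.rTensor H (deltaL W Λ)) (deltaL W Λ h))
        = (LinearMap.lTensor H (deltaL W Λ)) (deltaL W Λ h)) ∧
    (∀ a b : H,
      deltaL W Λ (a * b) = deltaL W Λ a * ((1 : H) ⊗ₜ[k] b) ∧
      deltaL W Λ (a * b) = (a ⊗ₜ[k] (1 : H)) * deltaL W Λ b) := by
  have hC : ∀ h : H, (h ⊗ₜ[k] (1:H)) * casimirC W Λ = casimirC W Λ * ((1:H) ⊗ₜ[k] h) :=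
    fun h => key_commute W Λ hΛ h
  have dL_apply : ∀ h : H, deltaL W Λ h = casimirC W Λ * ((1:H) ⊗ₜ[k] h) := fun _ => rfl
  constructor
  · -- coassociativity
    intro h
    have claimA : ∀ u : H ⊗[k] H,
        LinearMap.rTensor H (deltaL W Λ) u
          = (casimirC W Λ ⊗ₜ[k] (1:H)) * ((TensorProduct.assoc k H H H).symm ((1:H) ⊗ₜ[k] u)) := by
      intro u
      induction u using TensorProduct.induction_on with
      | zero => simp
      | tmul x y =>
        rw [LinearMap.rTensor_tmul,
          show (TensorProduct.assoc k H H H).symm ((1:H) ⊗ₜ[k] (x ⊗ₜ[k] y))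
            = ((1:H) ⊗ₜ[k] x) ⊗ₜ[k] y from rfl,
          Algebra.TensorProduct.tmul_mul_tmul, one_mul, dL_apply]
      | add s t hs ht => simp only [add_tmul, tmul_add, map_add, add_mul, mul_add, hs, ht]
    have claimB : ∀ u : H ⊗[k] H,
        LinearMap.lTensor H (deltaL W Λ) u
          = ((1:H) ⊗ₜ[k] casimirC W Λ) *
            (LinearMap.lTensor H
              (Algebra.TensorProduct.includeRight : H →ₐ[k] H ⊗[k] H).toLinearMap u) := by
      intro u
      induction u using TensorProduct.induction_on with
      | zero => simp
      | tmul x y =>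
        rw [LinearMap.lTensor_tmul, LinearMap.lTensor_tmul,
          Algebra.TensorProduct.tmul_mul_tmul, one_mul, dL_apply]
        rfl
      | add s t hs ht => simp only [add_tmul, tmul_add, map_add, add_mul, mul_add, hs, ht]
    have claimC : ∀ u : H ⊗[k] H,
        LinearMap.lTensor H
            (Algebra.TensorProduct.includeRight : H →ₐ[k] H ⊗[k] H).toLinearMap
            (u * ((1:H) ⊗ₜ[k] h))
          = LinearMap.lTensor H
              (Algebra.TensorProduct.includeRight : H →ₐ[k] H ⊗[k] H).toLinearMap u
            * ((1:H) ⊗ₜ[k] ((1:H) ⊗ₜ[k] h)) := by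
      intro u
      induction u using TensorProduct.induction_on with
      | zero => simp
      | tmul x y =>
        rw [Algebra.TensorProduct.tmul_mul_tmul, mul_one, LinearMap.lTensor_tmul,
          LinearMap.lTensor_tmul, Algebra.TensorProduct.tmul_mul_tmul, mul_one]
        show x ⊗ₜ[k] ((1:H) ⊗ₜ[k] (y * h)) = x ⊗ₜ[k] (((1:H) ⊗ₜ[k] y) * ((1:H) ⊗ₜ[k] h))
        rw [Algebra.TensorProduct.tmul_mul_tmul, one_mul]
      | add s t hs ht => simp only [add_tmul, tmul_add, map_add, add_mul, mul_add, hs, ht]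
    have claimD : ∀ u : H ⊗[k] H,
        ((1:H) ⊗ₜ[k] casimirC W Λ) *
            (LinearMap.lTensor H
              (Algebra.TensorProduct.includeRight : H →ₐ[k] H ⊗[k] H).toLinearMap u)
          = (TensorProduct.assoc k H H H) (u ⊗ₜ[k] (1:H)) * ((1:H) ⊗ₜ[k] casimirC W Λ) := by
      intro u
      induction u using TensorProduct.induction_on with
      | zero => simp
      | tmul x y =>
        rw [LinearMap.lTensor_tmul,
          show (Algebra.TensorProduct.includeRight : H →ₐ[k] H ⊗[k] H).toLinearMap y
            = (1:H) ⊗ₜ[k] y from rfl,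
          show (TensorProduct.assoc k H H H) ((x ⊗ₜ[k] y) ⊗ₜ[k] (1:H))
            = x ⊗ₜ[k] (y ⊗ₜ[k] (1:H)) from rfl,
          Algebra.TensorProduct.tmul_mul_tmul, Algebra.TensorProduct.tmul_mul_tmul,
          one_mul, mul_one, ← hC y]
      | add s t hs ht => simp only [add_tmul, tmul_add, map_add, add_mul, mul_add, hs, ht]
    rw [dL_apply h, claimA, claimB, assoc_mul, LinearEquiv.apply_symm_apply, claimC,
      ← mul_assoc, claimD, mul_assoc]
    congr 1
    rw [Algebra.TensorProduct.tmul_mul_tmul, one_mul]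
  · -- bimodule morphism property
    intro a b
    constructor
    · rw [dL_apply, dL_apply, mul_assoc, Algebra.TensorProduct.tmul_mul_tmul, one_mul]
    · rw [dL_apply, dL_apply, ← mul_assoc, hC a, mul_assoc, Algebra.TensorProduct.tmul_mul_tmul, one_mul]
end

section
/- Let G be a finite groupoid and kG its groupoid algebra. The element Λ = Σ_{h ∈ G₁} h is a left integral of the weak Hopf algebra kG, and the functional λ ∈ (kG)* defined by λ(g) = 1 if g is an identity morphism and 0 otherwise satisfies λ(Λ₁)Λ₂ = 1_{kG}. Hence Λ is a non-degenerate left integral and kG is a Frobenius algebra. -/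
/-!
A finite groupoid is given by a finite type of objects `O`, finite hom-sets `Hom X Y` (all
morphisms invertible), identities `id'`, composition `comp` and inversion `inv`.  The set of
morphisms is `Mor = Σ X Y, Hom X Y` and the groupoid algebra `kG` is the vector space
`Mor → k` with convolution product `mulG` (product of two composable morphisms is their
composite, `0` otherwise) and unit `oneG = ∑_X id_X`.
-/

/-- The set of morphisms of the groupoid. -/
abbrev Mor (O : Type*) (Hom : O → O → Type*) : Type _ := Σ X Y : O, Hom X Y

/-- The convolution product of the groupoid algebra. -/
noncomputable def mulG (k : Type*) [Field k] (O : Type*) [Fintype O] [DecidableEq O]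
    (Hom : O → O → Type*) [∀ X Y, Fintype (Hom X Y)] [∀ X Y, DecidableEq (Hom X Y)]
    (comp : ∀ X Y Z : O, Hom X Y → Hom Y Z → Hom X Z)
    (x y : Mor O Hom → k) : Mor O Hom → k :=
  fun t => ∑ Y : O, ∑ g : Hom t.1 Y, ∑ h : Hom Y t.2.1,
    if comp t.1 Y t.2.1 g h = t.2.2 then x ⟨t.1, Y, g⟩ * y ⟨Y, t.2.1, h⟩ else 0

/-- The unit `∑_{X ∈ G₀} id_X` of the groupoid algebra (as a function: the indicator of the
identity morphisms). -/
noncomputable def oneG (k : Type*) [Field k] (O : Type*) [Fintype O] [DecidableEq O]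
    (Hom : O → O → Type*) [∀ X Y, Fintype (Hom X Y)] [∀ X Y, DecidableEq (Hom X Y)]
    (id' : ∀ X : O, Hom X X) : Mor O Hom → k :=
  fun t => if t = (⟨t.2.1, t.2.1, id' t.2.1⟩ : Mor O Hom) then 1 else 0

/-- The target counital map `ε_t` of the weak Hopf algebra `kG`:
`ε_t(g) = id_{s(g)}` on the basis (for `g : X ⟶ Y` realized as `⟨X,Y,g⟩`). -/
noncomputable def epsTG (k : Type*) [Field k] (O : Type*) [Fintype O] [DecidableEq O]
    (Hom : O → O → Type*) [∀ X Y, Fintype (Hom X Y)] [∀ X Y, DecidableEq (Hom X Y)]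
    (id' : ∀ X : O, Hom X X) (x : Mor O Hom → k) : Mor O Hom → k :=
  ∑ X : O, (∑ Z : O, ∑ g : Hom X Z, x ⟨X, Z, g⟩) •
    (Pi.single (⟨X, X, id' X⟩ : Mor O Hom) (1 : k) : Mor O Hom → k)

/-- The integral functional `λ(g) = 1` if `g` is an identity morphism, `0` otherwise. -/
noncomputable def lamG (k : Type*) [Field k] (O : Type*) [Fintype O] [DecidableEq O]
    (Hom : O → O → Type*) [∀ X Y, Fintype (Hom X Y)] [∀ X Y, DecidableEq (Hom X Y)]
    (id' : ∀ X : O, Hom X X) (x : Mor O Hom → k) : k :=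
  ∑ X : O, x ⟨X, X, id' X⟩

set_option linter.unusedSectionVars false

section Aux

variable {k : Type*} [Field k] {O : Type*} [Fintype O] [DecidableEq O]
    {Hom : O → O → Type*} [∀ X Y, Fintype (Hom X Y)] [∀ X Y, DecidableEq (Hom X Y)]
    (id' : ∀ X : O, Hom X X)
    (comp : ∀ X Y Z : O, Hom X Y → Hom Y Z → Hom X Z)
    (inv : ∀ X Y : O, Hom X Y → Hom Y X)
    (id_comp : ∀ (X Y : O) (f : Hom X Y), comp X X Y (id' X) f = f)
    (comp_id : ∀ (X Y : O) (f : Hom X Y), comp X Y Y f (id' Y) = f)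
    (comp_assoc : ∀ (W X Y Z : O) (f : Hom W X) (g : Hom X Y) (h : Hom Y Z),
      comp W Y Z (comp W X Y f g) h = comp W X Z f (comp X Y Z g h))
    (inv_comp : ∀ (X Y : O) (f : Hom X Y), comp Y X Y (inv X Y f) f = id' Y)
    (comp_inv : ∀ (X Y : O) (f : Hom X Y), comp X Y X f (inv X Y f) = id' X)

include id_comp comp_id comp_assoc inv_comp comp_inv

lemma cancel_iff {X Y Z : O} (g : Hom X Y) (h : Hom Y Z) (m : Hom X Z) :
    comp X Y Z g h = m ↔ h = comp Y X Z (inv X Y g) m := by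
  constructor
  · rintro rfl
    rw [← comp_assoc, inv_comp, id_comp]
  · rintro rfl
    rw [← comp_assoc, comp_inv, id_comp]

lemma cancel_iff' {X Y Z : O} (g : Hom X Y) (h : Hom Y Z) (m : Hom X Z) :
    comp X Y Z g h = m ↔ g = comp X Z Y m (inv Y Z h) := by
  constructor
  · rintro rfl
    rw [comp_assoc, comp_inv, comp_id]
  · rintro rfl
    rw [comp_assoc, inv_comp, comp_id]

lemma inv_inv' {X Y : O} (f : Hom X Y) : inv Y X (inv X Y f) = f := by
  have h := (cancel_iff id' comp inv id_comp comp_id comp_assoc inv_comp comp_inv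
      (inv X Y f) f (id' Y)).mp (inv_comp X Y f)
  rwa [comp_id, eq_comm] at h

end Aux

section Sums

lemma sum_sig {M : Type*} [AddCommMonoid M] {A : Type*} [Fintype A]
    {B : A → Type*} [∀ a, Fintype (B a)] (G : (Σ a, B a) → M) :
    (∑ a : A, ∑ b : B a, G ⟨a, b⟩) = ∑ p : Σ a, B a, G p := by
  conv_rhs => rw [← Finset.univ_sigma_univ]
  rw [Finset.sum_sigma]

lemma sum_mor {M : Type*} [AddCommMonoid M] {O : Type*} [Fintype O]
    {Hom : O → O → Type*} [∀ X Y, Fintype (Hom X Y)] (G : Mor O Hom → M) :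
    (∑ X : O, ∑ Y : O, ∑ g : Hom X Y, G ⟨X, Y, g⟩) = ∑ q : Mor O Hom, G q := by
  rw [← sum_sig (G := G)]
  exact Finset.sum_congr rfl fun X _ => sum_sig (fun p => G ⟨X, p⟩)

lemma sum_ite_eq_univ {M : Type*} [AddCommMonoid M] {A : Type*} [Fintype A] [DecidableEq A]
    (c : A) (F : A → M) : (∑ a : A, if a = c then F a else 0) = F c := by
  rw [Finset.sum_ite_eq' Finset.univ c F]
  exact if_pos (Finset.mem_univ c)

end Sums

section Aux2

variable {k : Type*} [Field k] {O : Type*} [Fintype O] [DecidableEq O]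
    {Hom : O → O → Type*} [∀ X Y, Fintype (Hom X Y)] [∀ X Y, DecidableEq (Hom X Y)]
    (id' : ∀ X : O, Hom X X)
    (comp : ∀ X Y Z : O, Hom X Y → Hom Y Z → Hom X Z)
    (inv : ∀ X Y : O, Hom X Y → Hom Y X)
    (id_comp : ∀ (X Y : O) (f : Hom X Y), comp X X Y (id' X) f = f)
    (comp_id : ∀ (X Y : O) (f : Hom X Y), comp X Y Y f (id' Y) = f)
    (comp_assoc : ∀ (W X Y Z : O) (f : Hom W X) (g : Hom X Y) (h : Hom Y Z),
      comp W Y Z (comp W X Y f g) h = comp W X Z f (comp X Y Z g h))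
    (inv_comp : ∀ (X Y : O) (f : Hom X Y), comp Y X Y (inv X Y f) f = id' Y)
    (comp_inv : ∀ (X Y : O) (f : Hom X Y), comp X Y X f (inv X Y f) = id' X)

include id_comp comp_id comp_assoc inv_comp comp_inv

lemma sum_ite_comp {X Y Z : O} (g : Hom X Y) (m : Hom X Z) (F : Hom Y Z → k) :
    (∑ h : Hom Y Z, if comp X Y Z g h = m then F h else 0)
      = F (comp Y X Z (inv X Y g) m) := by
  simp only [cancel_iff id' comp inv id_comp comp_id comp_assoc inv_comp comp_inv g _ m]
  exact sum_ite_eq_univ _ F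

lemma sum_ite_comp' {X Y Z : O} (h : Hom Y Z) (m : Hom X Z) (F : Hom X Y → k) :
    (∑ g : Hom X Y, if comp X Y Z g h = m then F g else 0)
      = F (comp X Z Y m (inv Y Z h)) := by
  simp only [cancel_iff' id' comp inv id_comp comp_id comp_assoc inv_comp comp_inv _ h m]
  exact sum_ite_eq_univ _ F

lemma mulG_apply (x y : Mor O Hom → k) (X Z : O) (m : Hom X Z) :
    mulG k O Hom comp x y ⟨X, Z, m⟩
      = ∑ Y : O, ∑ g : Hom X Y, x ⟨X, Y, g⟩ * y ⟨Y, Z, comp Y X Z (inv X Y g) m⟩ := by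
  unfold mulG
  refine Finset.sum_congr rfl fun Y _ => Finset.sum_congr rfl fun g _ => ?_
  exact sum_ite_comp id' comp inv id_comp comp_id comp_assoc inv_comp comp_inv g m
    (fun h => x ⟨X, Y, g⟩ * y ⟨Y, Z, h⟩)

lemma mulG_apply' (x y : Mor O Hom → k) (X Z : O) (m : Hom X Z) :
    mulG k O Hom comp x y ⟨X, Z, m⟩
      = ∑ Y : O, ∑ h : Hom Y Z, x ⟨X, Y, comp X Z Y m (inv Y Z h)⟩ * y ⟨Y, Z, h⟩ := by
  unfold mulG
  refine Finset.sum_congr rfl fun Y _ => ?_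
  rw [Finset.sum_comm]
  refine Finset.sum_congr rfl fun h _ => ?_
  exact sum_ite_comp' id' comp inv id_comp comp_id comp_assoc inv_comp comp_inv h m
    (fun g => x ⟨X, Y, g⟩ * y ⟨Y, Z, h⟩)

end Aux2

lemma sum4_comm {M : Type*} [AddCommMonoid M]
    {A : Type*} [Fintype A] {B : A → Type*} [∀ a, Fintype (B a)]
    {C : Type*} [Fintype C] {D : C → Type*} [∀ c, Fintype (D c)]
    (f : ∀ a : A, B a → ∀ c : C, D c → M) :
    (∑ a : A, ∑ b : B a, ∑ c : C, ∑ d : D c, f a b c d)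
      = ∑ c : C, ∑ d : D c, ∑ a : A, ∑ b : B a, f a b c d := by
  have h1 : (∑ a : A, ∑ b : B a, ∑ c : C, ∑ d : D c, f a b c d)
      = ∑ p : Σ a, B a, ∑ q : Σ c, D c, f p.1 p.2 q.1 q.2 := by
    rw [← sum_sig (G := fun p : Σ a, B a => ∑ q : Σ c, D c, f p.1 p.2 q.1 q.2)]
    exact Finset.sum_congr rfl fun a _ => Finset.sum_congr rfl fun b _ =>
      (sum_sig (fun q : Σ c, D c => f a b q.1 q.2)).symm.symm
  have h2 : (∑ c : C, ∑ d : D c, ∑ a : A, ∑ b : B a, f a b c d)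
      = ∑ q : Σ c, D c, ∑ p : Σ a, B a, f p.1 p.2 q.1 q.2 := by
    rw [← sum_sig (G := fun q : Σ c, D c => ∑ p : Σ a, B a, f p.1 p.2 q.1 q.2)]
    exact Finset.sum_congr rfl fun c _ => Finset.sum_congr rfl fun d _ =>
      (sum_sig (fun p : Σ a, B a => f p.1 p.2 c d)).symm.symm
  rw [h1, h2, Finset.sum_comm]

section Aux3

variable {k : Type*} [Field k] {O : Type*} [Fintype O] [DecidableEq O]
    {Hom : O → O → Type*} [∀ X Y, Fintype (Hom X Y)] [∀ X Y, DecidableEq (Hom X Y)]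
    (id' : ∀ X : O, Hom X X)
    (comp : ∀ X Y Z : O, Hom X Y → Hom Y Z → Hom X Z)
    (inv : ∀ X Y : O, Hom X Y → Hom Y X)
    (id_comp : ∀ (X Y : O) (f : Hom X Y), comp X X Y (id' X) f = f)
    (comp_id : ∀ (X Y : O) (f : Hom X Y), comp X Y Y f (id' Y) = f)
    (comp_assoc : ∀ (W X Y Z : O) (f : Hom W X) (g : Hom X Y) (h : Hom Y Z),
      comp W Y Z (comp W X Y f g) h = comp W X Z f (comp X Y Z g h))
    (inv_comp : ∀ (X Y : O) (f : Hom X Y), comp Y X Y (inv X Y f) f = id' Y)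
    (comp_inv : ∀ (X Y : O) (f : Hom X Y), comp X Y X f (inv X Y f) = id' X)

include id_comp comp_id comp_assoc inv_comp comp_inv

lemma mulG_assoc (x y z : Mor O Hom → k) :
    mulG k O Hom comp (mulG k O Hom comp x y) z
      = mulG k O Hom comp x (mulG k O Hom comp y z) := by
  funext t
  obtain ⟨X, Z, m⟩ := t
  rw [mulG_apply' id' comp inv id_comp comp_id comp_assoc inv_comp comp_inv,
    mulG_apply id' comp inv id_comp comp_id comp_assoc inv_comp comp_inv]
  conv_lhs => simp only [mulG_apply id' comp inv id_comp comp_id comp_assoc inv_comp comp_inv]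
  conv_rhs => simp only [mulG_apply' id' comp inv id_comp comp_id comp_assoc inv_comp comp_inv]
  simp only [Finset.sum_mul, Finset.mul_sum]
  rw [sum4_comm (f := fun (Y : O) (h : Hom Y Z) (W : O) (a : Hom X W) =>
    x ⟨X, W, a⟩ * y ⟨W, Y, comp W X Y (inv X W a) (comp X Z Y m (inv Y Z h))⟩ * z ⟨Y, Z, h⟩)]
  refine Finset.sum_congr rfl fun W _ => Finset.sum_congr rfl fun a _ =>
    Finset.sum_congr rfl fun Y _ => Finset.sum_congr rfl fun h _ => ?_
  rw [mul_assoc, ← comp_assoc]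

end Aux3

section Aux4

variable {k : Type*} [Field k] {O : Type*} [Fintype O] [DecidableEq O]
    {Hom : O → O → Type*} [∀ X Y, Fintype (Hom X Y)] [∀ X Y, DecidableEq (Hom X Y)]
    (id' : ∀ X : O, Hom X X)
    (comp : ∀ X Y Z : O, Hom X Y → Hom Y Z → Hom X Z)
    (inv : ∀ X Y : O, Hom X Y → Hom Y X)
    (id_comp : ∀ (X Y : O) (f : Hom X Y), comp X X Y (id' X) f = f)
    (comp_id : ∀ (X Y : O) (f : Hom X Y), comp X Y Y f (id' Y) = f)
    (comp_assoc : ∀ (W X Y Z : O) (f : Hom W X) (g : Hom X Y) (h : Hom Y Z),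
      comp W Y Z (comp W X Y f g) h = comp W X Z f (comp X Y Z g h))
    (inv_comp : ∀ (X Y : O) (f : Hom X Y), comp Y X Y (inv X Y f) f = id' Y)
    (comp_inv : ∀ (X Y : O) (f : Hom X Y), comp X Y X f (inv X Y f) = id' X)

lemma epsTG_apply (x : Mor O Hom → k) (t : Mor O Hom) :
    epsTG k O Hom id' x t
      = if t = ⟨t.1, t.1, id' t.1⟩ then ∑ Z : O, ∑ g : Hom t.1 Z, x ⟨t.1, Z, g⟩ else 0 := by
  unfold epsTG
  rw [Finset.sum_apply, Finset.sum_eq_single t.1]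
  · rw [Pi.smul_apply, Pi.single_apply, smul_eq_mul, mul_ite, mul_one, mul_zero]
  · intro X _ hX
    rw [Pi.smul_apply, Pi.single_apply, smul_eq_mul, mul_ite, mul_one, mul_zero, if_neg]
    intro hc
    exact hX (by rw [hc])
  · intro h
    exact absurd (Finset.mem_univ _) h

include id_comp comp_id comp_assoc inv_comp comp_inv in
lemma lamG_mulG (x y : Mor O Hom → k) :
    lamG k O Hom id' (mulG k O Hom comp x y)
      = ∑ q : Mor O Hom, x q * y ⟨q.2.1, q.1, inv q.1 q.2.1 q.2.2⟩ := by
  unfold lamG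
  rw [← sum_mor (G := fun q : Mor O Hom => x q * y ⟨q.2.1, q.1, inv q.1 q.2.1 q.2.2⟩)]
  refine Finset.sum_congr rfl fun X _ => ?_
  rw [mulG_apply id' comp inv id_comp comp_id comp_assoc inv_comp comp_inv]
  refine Finset.sum_congr rfl fun Y _ => Finset.sum_congr rfl fun g _ => ?_
  rw [comp_id]

lemma lamG_add (u v : Mor O Hom → k) :
    lamG k O Hom id' (u + v) = lamG k O Hom id' u + lamG k O Hom id' v := by
  simp [lamG, Finset.sum_add_distrib]

lemma lamG_smul (c : k) (u : Mor O Hom → k) :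
    lamG k O Hom id' (c • u) = c * lamG k O Hom id' u := by
  simp [lamG, Finset.mul_sum]

lemma ite_add_zero' {M : Type*} [AddZeroClass M] (P : Prop) [Decidable P] (a b : M) :
    (if P then a + b else 0) = (if P then a else 0) + (if P then b else 0) := by
  split_ifs <;> simp

lemma mulG_add_left (x x' y : Mor O Hom → k) :
    mulG k O Hom comp (x + x') y = mulG k O Hom comp x y + mulG k O Hom comp x' y := by
  funext t
  simp [mulG, add_mul, ite_add_zero', Finset.sum_add_distrib]

lemma mulG_add_right (x y y' : Mor O Hom → k) :
    mulG k O Hom comp x (y + y') = mulG k O Hom comp x y + mulG k O Hom comp x y' := by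
  funext t
  simp [mulG, mul_add, ite_add_zero', Finset.sum_add_distrib]

lemma mulG_smul_left (c : k) (x y : Mor O Hom → k) :
    mulG k O Hom comp (c • x) y = c • mulG k O Hom comp x y := by
  funext t
  simp [mulG, Finset.mul_sum, mul_ite, mul_assoc]

lemma mulG_smul_right (c : k) (x y : Mor O Hom → k) :
    mulG k O Hom comp x (c • y) = c • mulG k O Hom comp x y := by
  funext t
  simp only [mulG, Pi.smul_apply, smul_eq_mul, Finset.mul_sum]
  refine Finset.sum_congr rfl fun Y _ => Finset.sum_congr rfl fun g _ =>
    Finset.sum_congr rfl fun h _ => ?_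
  rw [mul_ite, mul_zero]
  ring_nf

end Aux4

section Aux5

variable {O : Type*} {Hom : O → O → Type*}

/-- Inversion on the set of morphisms. -/
def invM (inv : ∀ X Y : O, Hom X Y → Hom Y X) : Mor O Hom → Mor O Hom :=
  fun q => ⟨q.2.1, q.1, inv q.1 q.2.1 q.2.2⟩

end Aux5

section Aux6

variable {k : Type*} [Field k] {O : Type*} [Fintype O] [DecidableEq O]
    {Hom : O → O → Type*} [∀ X Y, Fintype (Hom X Y)] [∀ X Y, DecidableEq (Hom X Y)]
    (id' : ∀ X : O, Hom X X)
    (comp : ∀ X Y Z : O, Hom X Y → Hom Y Z → Hom X Z)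
    (inv : ∀ X Y : O, Hom X Y → Hom Y X)
    (id_comp : ∀ (X Y : O) (f : Hom X Y), comp X X Y (id' X) f = f)
    (comp_id : ∀ (X Y : O) (f : Hom X Y), comp X Y Y f (id' Y) = f)
    (comp_assoc : ∀ (W X Y Z : O) (f : Hom W X) (g : Hom X Y) (h : Hom Y Z),
      comp W Y Z (comp W X Y f g) h = comp W X Z f (comp X Y Z g h))
    (inv_comp : ∀ (X Y : O) (f : Hom X Y), comp Y X Y (inv X Y f) f = id' Y)
    (comp_inv : ∀ (X Y : O) (f : Hom X Y), comp X Y X f (inv X Y f) = id' X)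

include id_comp comp_id comp_assoc inv_comp comp_inv

lemma invM_invM (q : Mor O Hom) : invM inv (invM inv q) = q := by
  obtain ⟨a, b, f⟩ := q
  show (⟨a, b, inv b a (inv a b f)⟩ : Mor O Hom) = ⟨a, b, f⟩
  rw [inv_inv' id' comp inv id_comp comp_id comp_assoc inv_comp comp_inv]

lemma invM_inj {q q' : Mor O Hom} (h : invM inv q = invM inv q') : q = q' := by
  rw [← invM_invM id' comp inv id_comp comp_id comp_assoc inv_comp comp_inv q,
      ← invM_invM id' comp inv id_comp comp_id comp_assoc inv_comp comp_inv q', h]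

lemma lamG_mulG' (x y : Mor O Hom → k) :
    lamG k O Hom id' (mulG k O Hom comp x y) = ∑ q : Mor O Hom, x q * y (invM inv q) :=
  lamG_mulG id' comp inv id_comp comp_id comp_assoc inv_comp comp_inv x y

end Aux6


/-- For a finite groupoid `G`, the element `Λ = ∑_{h ∈ G₁} h` is a left
integral of the groupoid algebra `kG`, the functional `λ` (indicator of identity morphisms)
satisfies `λ(Λ₁)Λ₂ = 1` (note `Δ(Λ) = ∑_h h ⊗ h`), the map `Ψ_Λ : φ ↦ Λ₁φ(Λ₂)` is bijective
(so `Λ` is non-degenerate), and `kG` is a Frobenius algebra (it admits an associative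
nondegenerate bilinear form). -/
theorem groupoid_algebra_frobenius
    (k : Type*) [Field k] (O : Type*) [Fintype O] [DecidableEq O]
    (Hom : O → O → Type*) [∀ X Y, Fintype (Hom X Y)] [∀ X Y, DecidableEq (Hom X Y)]
    (id' : ∀ X : O, Hom X X)
    (comp : ∀ X Y Z : O, Hom X Y → Hom Y Z → Hom X Z)
    (inv : ∀ X Y : O, Hom X Y → Hom Y X)
    (id_comp : ∀ (X Y : O) (f : Hom X Y), comp X X Y (id' X) f = f)
    (comp_id : ∀ (X Y : O) (f : Hom X Y), comp X Y Y f (id' Y) = f)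
    (comp_assoc : ∀ (W X Y Z : O) (f : Hom W X) (g : Hom X Y) (h : Hom Y Z),
      comp W Y Z (comp W X Y f g) h = comp W X Z f (comp X Y Z g h))
    (inv_comp : ∀ (X Y : O) (f : Hom X Y), comp Y X Y (inv X Y f) f = id' Y)
    (comp_inv : ∀ (X Y : O) (f : Hom X Y), comp X Y X f (inv X Y f) = id' X) :
    (∀ x : Mor O Hom → k,
      mulG k O Hom comp x (fun _ => 1)
        = mulG k O Hom comp (epsTG k O Hom id' x) (fun _ => 1)) ∧
    ((∑ h : Mor O Hom,
        lamG k O Hom id' (Pi.single h (1 : k)) • (Pi.single h (1 : k) : Mor O Hom → k))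
      = oneG k O Hom id') ∧
    Function.Bijective (fun φ : (Mor O Hom → k) →ₗ[k] k =>
      ∑ h : Mor O Hom, φ (Pi.single h (1 : k)) • (Pi.single h (1 : k) : Mor O Hom → k)) ∧
    (∃ B : (Mor O Hom → k) →ₗ[k] (Mor O Hom → k) →ₗ[k] k,
      (∀ x y z : Mor O Hom → k,
        B (mulG k O Hom comp x y) z = B x (mulG k O Hom comp y z)) ∧
      (∀ x : Mor O Hom → k, x ≠ 0 → ∃ y, B x y ≠ 0) ∧
      (∀ y : Mor O Hom → k, y ≠ 0 → ∃ x, B x y ≠ 0)) := by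
  refine ⟨?_, ?_, ?_, ?_⟩
  · -- left integral property
    intro x
    funext t
    obtain ⟨X, Z, m⟩ := t
    rw [mulG_apply id' comp inv id_comp comp_id comp_assoc inv_comp comp_inv,
        mulG_apply id' comp inv id_comp comp_id comp_assoc inv_comp comp_inv]
    simp only [mul_one]
    simp only [epsTG_apply id']
    have hiff : ∀ (Y : O) (g : Hom X Y),
        ((⟨X, Y, g⟩ : Mor O Hom) = ⟨X, X, id' X⟩)
          ↔ ((⟨Y, g⟩ : Σ Y : O, Hom X Y) = ⟨X, id' X⟩) := by
      intro Y g
      constructor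
      · intro h
        exact eq_of_heq (Sigma.mk.inj_iff.mp h).2
      · intro h
        rw [Sigma.mk.inj_iff]
        exact ⟨rfl, heq_of_eq h⟩
    simp only [hiff]
    rw [sum_sig (G := fun p : Σ Y : O, Hom X Y =>
      if p = (⟨X, id' X⟩ : Σ Y : O, Hom X Y) then
        (∑ Z' : O, ∑ g : Hom X Z', x ⟨X, Z', g⟩) else 0)]
    rw [sum_ite_eq_univ (⟨X, id' X⟩ : Σ Y : O, Hom X Y)]
  · -- λ(Λ₁)Λ₂ = 1
    funext t
    rw [Finset.sum_apply]
    simp only [Pi.smul_apply, smul_eq_mul, Pi.single_apply, mul_ite, mul_one, mul_zero]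
    rw [Finset.sum_ite_eq, if_pos (Finset.mem_univ t)]
    unfold lamG oneG
    simp only [Pi.single_apply]
    rw [Finset.sum_eq_single t.2.1]
    · exact if_congr eq_comm rfl rfl
    · intro X _ hX
      rw [if_neg]
      intro hc
      exact hX (by rw [← hc])
    · intro h
      exact absurd (Finset.mem_univ _) h
  · -- bijectivity of Ψ_Λ
    refine Function.bijective_iff_has_inverse.mpr
      ⟨fun v => ∑ h : Mor O Hom, v h • LinearMap.proj h, ?_, ?_⟩
    · intro φ
      refine LinearMap.ext fun v => ?_
      simp only [LinearMap.sum_apply, LinearMap.smul_apply, LinearMap.proj_apply, smul_eq_mul,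
        Finset.sum_apply, Pi.smul_apply, Pi.single_apply, mul_ite, mul_one, mul_zero,
        Finset.sum_ite_eq]
      simp only [Finset.mem_univ, if_true]
      have hv : ∀ h : Mor O Hom,
          (Pi.single h (v h) : Mor O Hom → k) = v h • (Pi.single h (1 : k) : Mor O Hom → k) :=
        fun h => by rw [← Pi.single_smul' h (v h) (1 : k), smul_eq_mul, mul_one]
      conv_rhs => rw [← Finset.univ_sum_single v]
      rw [map_sum]
      simp only [hv, map_smul, smul_eq_mul]
      exact Finset.sum_congr rfl fun h _ => mul_comm _ _
    · intro v
      funext t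
      simp only [Finset.sum_apply, Pi.smul_apply, smul_eq_mul, Pi.single_apply,
        LinearMap.sum_apply, LinearMap.smul_apply, LinearMap.proj_apply, mul_ite, mul_one,
        mul_zero, Finset.sum_ite_eq, Finset.sum_ite_eq', Finset.mem_univ, if_true]
  · -- Frobenius form
    refine ⟨LinearMap.mk₂ k (fun x y => lamG k O Hom id' (mulG k O Hom comp x y))
      (fun x x' y => by rw [mulG_add_left, lamG_add])
      (fun c x y => by rw [mulG_smul_left, lamG_smul, smul_eq_mul])
      (fun x y y' => by rw [mulG_add_right, lamG_add])
      (fun c x y => by rw [mulG_smul_right, lamG_smul, smul_eq_mul]), ?_, ?_, ?_⟩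
    · intro x y z
      simp only [LinearMap.mk₂_apply]
      rw [mulG_assoc id' comp inv id_comp comp_id comp_assoc inv_comp comp_inv]
    · intro x hx
      have hex : ∃ t, x t ≠ 0 := by
        by_contra h
        push_neg at h
        exact hx (funext h)
      obtain ⟨t, ht⟩ := hex
      refine ⟨Pi.single (invM inv t) 1, ?_⟩
      simp only [LinearMap.mk₂_apply]
      rw [lamG_mulG' id' comp inv id_comp comp_id comp_assoc inv_comp comp_inv]
      have hcond : ∀ q : Mor O Hom, (invM inv q = invM inv t) ↔ q = t := fun q =>
        ⟨fun h => invM_inj id' comp inv id_comp comp_id comp_assoc inv_comp comp_inv h,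
         fun h => h ▸ rfl⟩
      simp only [Pi.single_apply, mul_ite, mul_one, mul_zero, hcond]
      rw [sum_ite_eq_univ t x]
      exact ht
    · intro y hy
      have hex : ∃ t, y t ≠ 0 := by
        by_contra h
        push_neg at h
        exact hy (funext h)
      obtain ⟨t, ht⟩ := hex
      refine ⟨Pi.single (invM inv t) 1, ?_⟩
      simp only [LinearMap.mk₂_apply]
      rw [lamG_mulG' id' comp inv id_comp comp_id comp_assoc inv_comp comp_inv]
      simp only [Pi.single_apply, ite_mul, one_mul, zero_mul]
      rw [sum_ite_eq_univ (invM inv t) (fun q => y (invM inv q)),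
        invM_invM id' comp inv id_comp comp_id comp_assoc inv_comp comp_inv]
      exact ht
end

section
/- Let B be a strongly separable k-algebra with symmetric separability idempotent e¹⊗e² (satisfying be¹⊗e² = e¹⊗e²b, e¹e² = 1, e¹⊗e² = e²⊗e¹) and trace form ω with ω(e¹)e² = 1 = e¹ω(e²). On H = B^{op} ⊗ B with multiplication (a⊗b)(a'⊗b') = a'a ⊗ bb', the maps Δ(a⊗b) = (e¹a ⊗ be'¹) ⊗ (e² ⊗ e'²) and ε(a⊗b) = ω(a)ω(b) make H a Frobenius algebra: Δ is coassociative, counital via ε, and an H-bimodule map. -/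
/-!
Writing `e = ∑ uᵢ ⊗ vᵢ`, the element `E = ∑ (op uᵢ ⊗ uⱼ) ⊗ (op vᵢ ⊗ vⱼ)` of `H ⊗ H` is a Casimir
element, `(x ⊗ 1) E = E (1 ⊗ x)`: up to shuffling the factors it is `eᵒᵖ ⊗ e`, where `e` is Casimir
in `B` and its opposite `eᵒᵖ` is Casimir in `Bᵐᵒᵖ` because `e` is symmetric. Now `Δ x = (x ⊗ 1) E`,
and the Frobenius identities hold for the comultiplication of any Casimir element: the bimodule
property is immediate from `Δ x = (x ⊗ 1) E = E (1 ⊗ x)`, both sides of coassociativity equal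
`E₁₂ (1 ⊗ x ⊗ 1) E₂₃`, and the counit laws reduce to `(ε ⊗ id) E = 1 = (id ⊗ ε) E`, which are the
trace conditions on `ω`.
-/

open TensorProduct MulOpposite

section SepMaps

variable (k : Type*) [Field k] (B : Type*) [Ring B] [Algebra k B]
  (ι : Type*) [Fintype ι] (u v : ι → B) (ω : B →ₗ[k] k)

/-- The comultiplication `Δ(a⊗b) = (e¹a ⊗ be'¹) ⊗ (e² ⊗ e'²)` on `H = Bᵐᵒᵖ ⊗ B`. -/
noncomputable def deltaH :
    (Bᵐᵒᵖ ⊗[k] B) →ₗ[k] (Bᵐᵒᵖ ⊗[k] B) ⊗[k] (Bᵐᵒᵖ ⊗[k] B) :=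
  TensorProduct.lift <| LinearMap.mk₂ k
    (fun (a : Bᵐᵒᵖ) (b : B) => ∑ i : ι, ∑ j : ι,
      ((op (u i * a.unop) ⊗ₜ[k] (b * u j)) ⊗ₜ[k] (op (v i) ⊗ₜ[k] v j)))
    (by intros; simp [mul_add, add_tmul, Finset.sum_add_distrib])
    (by intros; simp [mul_smul_comm, smul_tmul', Finset.smul_sum])
    (by intros; simp [add_mul, tmul_add, add_tmul, Finset.sum_add_distrib])
    (by intros; simp [mul_smul_comm, smul_tmul', tmul_smul, Finset.smul_sum])

/-- The counit `ε(a⊗b) = ω(a)ω(b)` on `H = Bᵐᵒᵖ ⊗ B`. -/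
noncomputable def epsH : (Bᵐᵒᵖ ⊗[k] B) →ₗ[k] k :=
  TensorProduct.lift <| LinearMap.mk₂ k
    (fun (a : Bᵐᵒᵖ) (b : B) => ω a.unop * ω b)
    (by intros; simp [add_mul])
    (by intros; simp [smul_eq_mul]; ring)
    (by intros; simp [mul_add])
    (by intros; simp [smul_eq_mul]; ring)

end SepMaps

section Casimir

variable {k : Type*} [CommSemiring k] {A : Type*} [Semiring A] [Algebra k A]

def IsCasimir (E : A ⊗[k] A) : Prop := ∀ a : A, (a ⊗ₜ[k] 1) * E = E * (1 ⊗ₜ a)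

variable (k) in
def casimirComul (E : A ⊗[k] A) : A →ₗ[k] A ⊗[k] A :=
  LinearMap.mulRight k E ∘ₗ (TensorProduct.mk k A A).flip 1

variable {E : A ⊗[k] A}

@[simp]
theorem casimirComul_apply (a : A) : casimirComul k E a = (a ⊗ₜ 1) * E := rfl

theorem casimirComul_mul_left (a b : A) :
    casimirComul k E (a * b) = (a ⊗ₜ 1) * casimirComul k E b := by
  rw [casimirComul_apply, casimirComul_apply, ← mul_assoc, Algebra.TensorProduct.tmul_mul_tmul,
    mul_one]

theorem IsCasimir.casimirComul_apply_eq_mul (hE : IsCasimir E) (a : A) :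
    casimirComul k E a = E * (1 ⊗ₜ a) := hE a

theorem IsCasimir.casimirComul_mul_right (hE : IsCasimir E) (a b : A) :
    casimirComul k E (a * b) = casimirComul k E a * (1 ⊗ₜ b) := by
  rw [hE.casimirComul_apply_eq_mul, hE.casimirComul_apply_eq_mul, mul_assoc,
    Algebra.TensorProduct.tmul_mul_tmul, mul_one]

theorem lTensor_casimirComul (z : A ⊗[k] A) :
    (casimirComul k E).lTensor A z = TensorProduct.assoc k A A A (z ⊗ₜ 1) * (1 ⊗ₜ E) := by
  induction z using TensorProduct.induction_on with
  | zero => simp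
  | tmul a b => simp [Algebra.TensorProduct.tmul_mul_tmul]
  | add y z hy hz => simp [hy, hz, add_tmul, add_mul]

theorem IsCasimir.assoc_rTensor_casimirComul (hE : IsCasimir E) (z : A ⊗[k] A) :
    TensorProduct.assoc k A A A ((casimirComul k E).rTensor A z) =
      TensorProduct.assoc k A A A (E ⊗ₜ 1) * (1 ⊗ₜ z) := by
  induction z using TensorProduct.induction_on with
  | zero => simp
  | tmul a b =>
    have : (casimirComul k E a) ⊗ₜ[k] b = (E ⊗ₜ 1) * ((1 ⊗ₜ a) ⊗ₜ b) := by
      rw [hE.casimirComul_apply_eq_mul, Algebra.TensorProduct.tmul_mul_tmul, one_mul]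
    rw [LinearMap.rTensor_tmul, this]
    exact map_mul (Algebra.TensorProduct.assoc k k k A A A) _ _
  | add y z hy hz => simp [hy, hz, tmul_add, mul_add]

theorem IsCasimir.casimirComul_coassoc (hE : IsCasimir E) (a : A) :
    TensorProduct.assoc k A A A ((casimirComul k E).rTensor A (casimirComul k E a)) =
      (casimirComul k E).lTensor A (casimirComul k E a) := by
  have h₁ : (1 : A) ⊗ₜ[k] ((a ⊗ₜ[k] (1 : A)) * E) = (1 ⊗ₜ (a ⊗ₜ 1)) * (1 ⊗ₜ E) := by
    rw [Algebra.TensorProduct.tmul_mul_tmul, one_mul]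
  have h₂ : TensorProduct.assoc k A A A ((E * (1 ⊗ₜ a)) ⊗ₜ 1) =
      TensorProduct.assoc k A A A (E ⊗ₜ 1) * (1 ⊗ₜ (a ⊗ₜ 1)) := by
    rw [show (E * (1 ⊗ₜ a)) ⊗ₜ[k] (1 : A) = (E ⊗ₜ 1) * ((1 ⊗ₜ a) ⊗ₜ 1) by
      rw [Algebra.TensorProduct.tmul_mul_tmul, mul_one]]
    exact map_mul (Algebra.TensorProduct.assoc k k k A A A) _ _
  rw [hE.assoc_rTensor_casimirComul, lTensor_casimirComul, casimirComul_apply, h₁,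
    hE a, h₂, mul_assoc]

theorem lid_rTensor_mul_one_tmul (ε : A →ₗ[k] k) (z : A ⊗[k] A) (a : A) :
    TensorProduct.lid k A (ε.rTensor A (z * (1 ⊗ₜ a))) =
      TensorProduct.lid k A (ε.rTensor A z) * a := by
  induction z using TensorProduct.induction_on with
  | zero => simp
  | tmul b c => simp [Algebra.TensorProduct.tmul_mul_tmul]
  | add y z hy hz => simp [hy, hz, add_mul]

theorem rid_lTensor_tmul_one_mul (ε : A →ₗ[k] k) (a : A) (z : A ⊗[k] A) :
    TensorProduct.rid k A (ε.lTensor A ((a ⊗ₜ 1) * z)) =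
      a * TensorProduct.rid k A (ε.lTensor A z) := by
  induction z using TensorProduct.induction_on with
  | zero => simp
  | tmul b c => simp [Algebra.TensorProduct.tmul_mul_tmul]
  | add y z hy hz => simp [hy, hz, mul_add]

theorem IsCasimir.lid_rTensor_casimirComul (hE : IsCasimir E) {ε : A →ₗ[k] k}
    (hε : TensorProduct.lid k A (ε.rTensor A E) = 1) (a : A) :
    TensorProduct.lid k A (ε.rTensor A (casimirComul k E a)) = a := by
  rw [hE.casimirComul_apply_eq_mul, lid_rTensor_mul_one_tmul, hε, one_mul]

theorem rid_lTensor_casimirComul {ε : A →ₗ[k] k}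
    (hε : TensorProduct.rid k A (ε.lTensor A E) = 1) (a : A) :
    TensorProduct.rid k A (ε.lTensor A (casimirComul k E a)) = a := by
  rw [casimirComul_apply, rid_lTensor_tmul_one_mul, hε, mul_one]

theorem IsCasimir.mul_tmul_one (hE : IsCasimir E) (hcomm : Algebra.TensorProduct.comm k A A E = E)
    (a : A) : E * (a ⊗ₜ 1) = (1 ⊗ₜ a) * E := by
  simpa [hcomm] using (congrArg (Algebra.TensorProduct.comm k A A) (hE a)).symm

theorem IsCasimir.op (hE : IsCasimir E) (hcomm : Algebra.TensorProduct.comm k A A E = E) :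
    IsCasimir ((Algebra.TensorProduct.opAlgEquiv k k A A).symm (op E)) := by
  intro x
  obtain ⟨a, rfl⟩ := MulOpposite.op_surjective x
  have h := congrArg (fun y => (Algebra.TensorProduct.opAlgEquiv k k A A).symm (MulOpposite.op y))
    (hE.mul_tmul_one hcomm a)
  simpa using h

theorem IsCasimir.tensorTensorTensorComm {A' : Type*} [Semiring A'] [Algebra k A']
    {E' : A' ⊗[k] A'} (hE : IsCasimir E) (hE' : IsCasimir E') :
    IsCasimir (Algebra.TensorProduct.tensorTensorTensorComm k k k k A A A' A' (E ⊗ₜ E')) := by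
  intro x
  induction x using TensorProduct.induction_on with
  | zero => simp
  | tmul a a' =>
    let T := Algebra.TensorProduct.tensorTensorTensorComm k k k k A A A' A'
    have hl : (a ⊗ₜ a') ⊗ₜ (1 : A ⊗[k] A') = T ((a ⊗ₜ 1) ⊗ₜ (a' ⊗ₜ 1)) := rfl
    have hr : (1 : A ⊗[k] A') ⊗ₜ (a ⊗ₜ a') = T ((1 ⊗ₜ a) ⊗ₜ (1 ⊗ₜ a')) := rfl
    rw [hl, hr, ← map_mul, ← map_mul, Algebra.TensorProduct.tmul_mul_tmul,
      Algebra.TensorProduct.tmul_mul_tmul, hE a, hE' a']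
  | add y z hy hz => simp [add_tmul, tmul_add, add_mul, mul_add, hy, hz]

theorem isCasimir_sum_tmul {ι : Type*} [Fintype ι] {u v : ι → A}
    (h : ∀ a : A, ∑ i, (a * u i) ⊗ₜ[k] v i = ∑ i, u i ⊗ₜ[k] (v i * a)) :
    IsCasimir (∑ i, u i ⊗ₜ[k] v i) := by
  intro a
  simpa [Finset.mul_sum, Finset.sum_mul, Algebra.TensorProduct.tmul_mul_tmul] using h a

end Casimir

section SeparableSquare

variable {k : Type*} [CommSemiring k] {B : Type*} [Semiring B] [Algebra k B]
  {ι : Type*} [Fintype ι] (u v : ι → B)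

variable (k) in
noncomputable def sepSquareCasimir : (Bᵐᵒᵖ ⊗[k] B) ⊗[k] (Bᵐᵒᵖ ⊗[k] B) :=
  Algebra.TensorProduct.tensorTensorTensorComm k k k k Bᵐᵒᵖ Bᵐᵒᵖ B B
    ((Algebra.TensorProduct.opAlgEquiv k k B B).symm (op (∑ i, u i ⊗ₜ[k] v i)) ⊗ₜ
      ∑ i, u i ⊗ₜ[k] v i)

theorem sepSquareCasimir_eq_sum : sepSquareCasimir k u v =
    ∑ i, ∑ j, (op (u i) ⊗ₜ[k] u j) ⊗ₜ[k] (op (v i) ⊗ₜ[k] v j) := by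
  simp only [sepSquareCasimir, Finset.op_sum, map_sum, Algebra.TensorProduct.opAlgEquiv_symm_tmul,
    tmul_sum, sum_tmul, Algebra.TensorProduct.tensorTensorTensorComm_tmul]
  exact Finset.sum_comm

theorem isCasimir_sepSquareCasimir
    (sep_casimir : ∀ b : B, (∑ i, (b * u i) ⊗ₜ[k] v i) = ∑ i, u i ⊗ₜ[k] (v i * b))
    (sep_symm : (∑ i, u i ⊗ₜ[k] v i) = ∑ i, v i ⊗ₜ[k] u i) :
    IsCasimir (sepSquareCasimir k u v) := by
  have he := isCasimir_sum_tmul sep_casimir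
  have hcomm : Algebra.TensorProduct.comm k B B (∑ i, u i ⊗ₜ[k] v i) = ∑ i, u i ⊗ₜ[k] v i := by
    simp [map_sum, sep_symm]
  exact (he.op hcomm).tensorTensorTensorComm he

end SeparableSquare

section SeparableSquareMaps

variable {k : Type*} [Field k] {B : Type*} [Ring B] [Algebra k B]
  {ι : Type*} [Fintype ι] (u v : ι → B)

theorem epsH_tmul (ω : B →ₗ[k] k) (a : Bᵐᵒᵖ) (b : B) :
    epsH k B ω (a ⊗ₜ b) = ω a.unop * ω b := by
  simp [epsH]

theorem deltaH_eq_casimirComul : deltaH k B ι u v = casimirComul k (sepSquareCasimir k u v) := by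
  refine TensorProduct.ext' fun a b => ?_
  simp [deltaH, sepSquareCasimir_eq_sum, Finset.mul_sum, Algebra.TensorProduct.tmul_mul_tmul]

theorem lid_rTensor_epsH_sepSquareCasimir (ω : B →ₗ[k] k)
    (trace_left : (∑ i, ω (u i) • v i) = 1) :
    TensorProduct.lid k _ ((epsH k B ω).rTensor _ (sepSquareCasimir k u v)) = 1 := by
  have trace_left_op : ∑ i, ω (u i) • op (v i) = 1 := by simpa using congrArg op trace_left
  simp only [sepSquareCasimir_eq_sum, map_sum, LinearMap.rTensor_tmul, epsH_tmul, unop_op, lid_tmul]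
  calc _ = (∑ i, ω (u i) • op (v i)) ⊗ₜ[k] (∑ j, ω (u j) • v j) := by
        rw [sum_tmul]; simp only [tmul_sum, smul_tmul_smul]
    _ = 1 := by rw [trace_left_op, trace_left]; rfl

theorem rid_lTensor_epsH_sepSquareCasimir (ω : B →ₗ[k] k)
    (trace_right : (∑ i, ω (v i) • u i) = 1) :
    TensorProduct.rid k _ ((epsH k B ω).lTensor _ (sepSquareCasimir k u v)) = 1 := by
  have trace_right_op : ∑ i, ω (v i) • op (u i) = 1 := by simpa using congrArg op trace_right
  simp only [sepSquareCasimir_eq_sum, map_sum, LinearMap.lTensor_tmul, epsH_tmul, unop_op, rid_tmul]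
  calc _ = (∑ i, ω (v i) • op (u i)) ⊗ₜ[k] (∑ j, ω (v j) • u j) := by
        rw [sum_tmul]; simp only [tmul_sum, smul_tmul_smul]
    _ = 1 := by rw [trace_right_op, trace_right]; rfl

end SeparableSquareMaps

theorem separable_square_frobenius_general
    (k : Type*) [Field k] (B : Type*) [Ring B] [Algebra k B]
    (ι : Type*) [Fintype ι] (u v : ι → B)
    (sep_casimir : ∀ b : B, (∑ i, (b * u i) ⊗ₜ[k] v i) = ∑ i, u i ⊗ₜ[k] (v i * b))
    (sep_symm : (∑ i, u i ⊗ₜ[k] v i) = ∑ i, v i ⊗ₜ[k] u i)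
    (ω : B →ₗ[k] k)
    (trace_left : (∑ i, ω (u i) • v i) = 1)
    (trace_right : (∑ i, ω (v i) • u i) = 1) :
    (∀ x : Bᵐᵒᵖ ⊗[k] B,
      (TensorProduct.assoc k _ _ _)
          ((LinearMap.rTensor _ (deltaH k B ι u v)) (deltaH k B ι u v x))
        = (LinearMap.lTensor _ (deltaH k B ι u v)) (deltaH k B ι u v x)) ∧
    (∀ x : Bᵐᵒᵖ ⊗[k] B,
      (TensorProduct.lid k _)
          ((LinearMap.rTensor _ (epsH k B ω)) (deltaH k B ι u v x)) = x ∧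
      (TensorProduct.rid k _)
          ((LinearMap.lTensor _ (epsH k B ω)) (deltaH k B ι u v x)) = x) ∧
    (∀ x y : Bᵐᵒᵖ ⊗[k] B,
      deltaH k B ι u v (x * y) = deltaH k B ι u v x * ((1 : Bᵐᵒᵖ ⊗[k] B) ⊗ₜ[k] y) ∧
      deltaH k B ι u v (x * y) = (x ⊗ₜ[k] (1 : Bᵐᵒᵖ ⊗[k] B)) * deltaH k B ι u v y) := by
  have hE := isCasimir_sepSquareCasimir u v sep_casimir sep_symm
  rw [deltaH_eq_casimirComul]
  exact ⟨hE.casimirComul_coassoc,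
    fun x => ⟨hE.lid_rTensor_casimirComul (lid_rTensor_epsH_sepSquareCasimir u v ω trace_left) x,
      rid_lTensor_casimirComul (rid_lTensor_epsH_sepSquareCasimir u v ω trace_right) x⟩,
    fun x y => ⟨hE.casimirComul_mul_right x y, casimirComul_mul_left x y⟩⟩

/-- Let `B` be a strongly separable `k`-algebra with symmetric separability
idempotent `∑ i, u i ⊗ v i` (so `b e¹ ⊗ e² = e¹ ⊗ e² b`, `e¹e² = 1`, `e¹⊗e² = e²⊗e¹`) and
trace form `ω` with `ω(e¹)e² = 1 = e¹ω(e²)`.  On `H = Bᵐᵒᵖ ⊗ B` (with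
`(a⊗b)(a'⊗b') = a'a ⊗ bb'`), the maps `Δ(a⊗b) = (e¹a ⊗ be'¹) ⊗ (e² ⊗ e'²)` and
`ε(a⊗b) = ω(a)ω(b)` make `H` a Frobenius algebra: `Δ` is coassociative, counital via `ε`,
and an `H`-bimodule map. -/
theorem separable_square_frobenius
    (k : Type*) [Field k] (B : Type*) [Ring B] [Algebra k B] [FiniteDimensional k B]
    (ι : Type*) [Fintype ι] (u v : ι → B)
    (sep_casimir : ∀ b : B, (∑ i, (b * u i) ⊗ₜ[k] v i) = ∑ i, u i ⊗ₜ[k] (v i * b))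
    (sep_one : (∑ i, u i * v i) = 1)
    (sep_symm : (∑ i, u i ⊗ₜ[k] v i) = ∑ i, v i ⊗ₜ[k] u i)
    (ω : B →ₗ[k] k)
    (trace_left : (∑ i, ω (u i) • v i) = 1)
    (trace_right : (∑ i, ω (v i) • u i) = 1) :
    (∀ x : Bᵐᵒᵖ ⊗[k] B,
      (TensorProduct.assoc k _ _ _)
          ((LinearMap.rTensor _ (deltaH k B ι u v)) (deltaH k B ι u v x))
        = (LinearMap.lTensor _ (deltaH k B ι u v)) (deltaH k B ι u v x)) ∧
    (∀ x : Bᵐᵒᵖ ⊗[k] B,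
      (TensorProduct.lid k _)
          ((LinearMap.rTensor _ (epsH k B ω)) (deltaH k B ι u v x)) = x ∧
      (TensorProduct.rid k _)
          ((LinearMap.lTensor _ (epsH k B ω)) (deltaH k B ι u v x)) = x) ∧
    (∀ x y : Bᵐᵒᵖ ⊗[k] B,
      deltaH k B ι u v (x * y) = deltaH k B ι u v x * ((1 : Bᵐᵒᵖ ⊗[k] B) ⊗ₜ[k] y) ∧
      deltaH k B ι u v (x * y) = (x ⊗ₜ[k] (1 : Bᵐᵒᵖ ⊗[k] B)) * deltaH k B ι u v y) :=
  separable_square_frobenius_general k B ι u v sep_casimir sep_symm ω trace_left trace_right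
end
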